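/- If G is a d-manifold, then its Barycentric refinement G1 is a d-manifold; if G is a d-sphere, then G1 is a d-sphere. -/
import Mathlib


open scoped Classical

/-- A finite simple graph: a finite vertex set together with a symmetric, irreflexive
adjacency relation supported on the vertex set. -/
structure FGraph (V : Type) where
  verts : Finset V
  Adj : V → V → Prop
  symm : ∀ {a b}, Adj a b → Adj b a
  loopless : ∀ a, ¬ Adj a a
  mem_of_adj : ∀ {a b}, Adj a b → a ∈ verts

namespace FGraph

variable {V W : Type}

/-- The subgraph induced on the vertices satisfying `P`. -/
noncomputable def induce (G : FGraph V) (P : V → Prop) : FGraph V where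
  verts := G.verts.filter P
  Adj a b := G.Adj a b ∧ P a ∧ P b
  symm h := ⟨G.symm h.1, h.2.2, h.2.1⟩
  loopless a h := G.loopless a h.1
  mem_of_adj h := Finset.mem_filter.mpr ⟨G.mem_of_adj h.1, h.2.1⟩

/-- The unit sphere of a vertex: the subgraph induced on its neighbors. -/
noncomputable def unitSphere (G : FGraph V) (v : V) : FGraph V :=
  G.induce (fun w => G.Adj v w)

/-- The graph with the vertex `v` (and its edges) removed. -/
noncomputable def erase (G : FGraph V) (v : V) : FGraph V :=
  G.induce (fun w => w ≠ v)

/-- Inductive definition of contractibility: the one-point graph is contractible, and a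
graph is contractible if some vertex has a contractible unit sphere and contractible
complement. -/
inductive Contractible : FGraph V → Prop
  | single (G : FGraph V) (v : V) (h : G.verts = {v}) : Contractible G
  | step (G : FGraph V) (v : V) (hv : v ∈ G.verts)
      (h1 : Contractible (G.unitSphere v)) (h2 : Contractible (G.erase v)) :
      Contractible G

mutual
  /-- `G` is a `d`-sphere: the empty graph is the `(-1)`-sphere, and a `d`-manifold is a
  `d`-sphere if removing some vertex renders it contractible. -/
  inductive IsSphere : ℤ → FGraph V → Prop
    | empty (G : FGraph V) (h : G.verts = ∅) : IsSphere (-1) G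
    | punctured (d : ℤ) (G : FGraph V) (hm : IsManifold d G) (v : V) (hv : v ∈ G.verts)
        (hc : Contractible (G.erase v)) : IsSphere d G
  /-- For `d ≥ 0`, `G` is a `d`-manifold iff every unit sphere is a `(d-1)`-sphere. -/
  inductive IsManifold : ℤ → FGraph V → Prop
    | intro (d : ℤ) (hd : 0 ≤ d) (G : FGraph V)
        (h : ∀ v ∈ G.verts, IsSphere (d - 1) (G.unitSphere v)) : IsManifold d G
end

/-- A simplex of `G`: the vertex set of a complete subgraph. -/
def IsSimplex (G : FGraph V) (x : Finset V) : Prop :=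
  x.Nonempty ∧ ↑x ⊆ G.verts ∧ ∀ a ∈ x, ∀ b ∈ x, a ≠ b → G.Adj a b

/-- The Barycentric refinement: vertices are the simplices of `G`, two being adjacent iff
one is strictly contained in the other. -/
noncomputable def barycentric (G : FGraph V) : FGraph (Finset V) where
  verts := G.verts.powerset.filter (fun x => G.IsSimplex x)
  Adj x y := G.IsSimplex x ∧ G.IsSimplex y ∧ (x ⊂ y ∨ y ⊂ x)
  symm h := ⟨h.2.1, h.1, h.2.2.symm⟩
  loopless x h := by rcases h.2.2 with h' | h' <;> exact (ssubset_irrefl x h')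
  mem_of_adj h := Finset.mem_filter.mpr ⟨Finset.mem_powerset.mpr h.1.2.1, h.1⟩

/-- Number of simplices of `G` with exactly `j` vertices (so `numSimplices G (k+1)` is
the `f`-vector entry `f_k(G)`). -/
noncomputable def numSimplices (G : FGraph V) (j : ℕ) : ℕ :=
  (G.verts.powerset.filter (fun x => G.IsSimplex x ∧ x.card = j)).card

/-- Euler characteristic `χ(G) = Σ_{k ≥ 0} (-1)^k f_k(G)`, where `f_k` counts the
simplices with `k+1` vertices. -/
noncomputable def euler (G : FGraph V) : ℤ :=
  ∑ k ∈ Finset.range G.verts.card, (-1 : ℤ) ^ k * G.numSimplices (k + 1)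

/-- The level set `{f = c}`: the subgraph of the Barycentric refinement induced by the
simplices on which `f - c` changes sign. -/
noncomputable def levelSet (G : FGraph V) (f : V → ℝ) (c : ℝ) : FGraph (Finset V) :=
  G.barycentric.induce (fun x => (∃ a ∈ x, f a - c < 0) ∧ (∃ b ∈ x, 0 < f b - c))

/-- Graph isomorphism. -/
def Iso (G : FGraph V) (H : FGraph W) : Prop :=
  ∃ φ : V → W, Set.BijOn φ ↑G.verts ↑H.verts ∧
    ∀ a ∈ G.verts, ∀ b ∈ G.verts, (G.Adj a b ↔ H.Adj (φ a) (φ b))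

/-- Zykov join of two graphs: disjoint union plus all edges between the two parts. -/
noncomputable def join (G : FGraph V) (H : FGraph W) : FGraph (V ⊕ W) where
  verts := G.verts.disjSum H.verts
  Adj a b :=
    match a, b with
    | .inl a, .inl b => G.Adj a b
    | .inr a, .inr b => H.Adj a b
    | .inl a, .inr b => a ∈ G.verts ∧ b ∈ H.verts
    | .inr a, .inl b => b ∈ G.verts ∧ a ∈ H.verts
  symm {a b} h := by
    cases a <;> cases b <;> simp_all <;> first | exact G.symm h | exact H.symm h
  loopless a h := by
    cases a <;> simp_all <;> first | exact G.loopless _ h | exact H.loopless _ h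
  mem_of_adj {a b} h := by
    cases a <;> cases b <;> simp_all [Finset.mem_disjSum] <;>
      first | exact G.mem_of_adj h | exact H.mem_of_adj h

/-- Union of two graphs on the same vertex type. -/
noncomputable def union (G H : FGraph V) : FGraph V where
  verts := G.verts ∪ H.verts
  Adj a b := G.Adj a b ∨ H.Adj a b
  symm h := h.imp G.symm H.symm
  loopless a h := h.elim (G.loopless a) (H.loopless a)
  mem_of_adj h :=
    h.elim (fun h' => Finset.mem_union_left _ (G.mem_of_adj h'))
      (fun h' => Finset.mem_union_right _ (H.mem_of_adj h'))

/-- A `d`-ball: a graph of the form `S - v` for a `d`-sphere `S` and a vertex `v` of `S`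
(up to graph isomorphism). -/
def IsBall (d : ℤ) (H : FGraph W) : Prop :=
  ∃ (S : FGraph ℕ) (v : ℕ), IsSphere d S ∧ v ∈ S.verts ∧ Iso H (S.erase v)

/-- A `d`-manifold with boundary: every unit sphere is a `(d-1)`-sphere or a `(d-1)`-ball. -/
def IsManifoldWithBoundary (d : ℤ) (G : FGraph V) : Prop :=
  ∀ v ∈ G.verts, IsSphere (d - 1) (G.unitSphere v) ∨ IsBall (d - 1) (G.unitSphere v)

/-- The cyclic graph `C_n` on the vertex set `Fin n`. -/
def cycleGraph (n : ℕ) : FGraph (Fin n) where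
  verts := Finset.univ
  Adj a b := a ≠ b ∧ ((a.val + 1) % n = b.val ∨ (b.val + 1) % n = a.val)
  symm h := ⟨h.1.symm, h.2.symm⟩
  loopless a h := h.1 rfl
  mem_of_adj _ := Finset.mem_univ _

/-- `G` is a disjoint union of cyclic graphs `C_n` with `n ≥ 4`: the vertex set splits
into pairwise disjoint pieces, edges never cross between pieces, and each piece induces
a graph isomorphic to a `C_n` with `n ≥ 4`. -/
def IsDisjointUnionOfCycles (G : FGraph V) : Prop :=
  ∃ P : Finset (Finset V),
    (∀ S ∈ P, ↑S ⊆ G.verts) ∧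
    (∀ S ∈ P, ∀ T ∈ P, S ≠ T → Disjoint S T) ∧
    (∀ v ∈ G.verts, ∃ S ∈ P, v ∈ S) ∧
    (∀ a b, G.Adj a b → ∀ S ∈ P, a ∈ S → b ∈ S) ∧
    (∀ S ∈ P, ∃ n, 4 ≤ n ∧ Iso (G.induce (· ∈ S)) (cycleGraph n))

/-- Poincaré–Hopf index `i_f(v) = 1 - χ(S^-_f(v))`. -/
noncomputable def pindex (G : FGraph V) (f : V → ℝ) (v : V) : ℤ :=
  1 - ((G.unitSphere v).induce (fun w => f w < f v)).euler

/-- Curvature `K(v) = Σ_{k ≥ 0} (-1)^k f_{k-1}(S(v))/(k+1)` with `f_{-1} = 1`. -/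
noncomputable def curvature (G : FGraph V) (v : V) : ℝ :=
  ∑ k ∈ Finset.range (G.verts.card + 1),
    (-1 : ℝ) ^ k * (if k = 0 then 1 else ((G.unitSphere v).numSimplices k : ℝ)) / (k + 1)

end FGraph

/-- `sign(a + i b) = sign(a) + i sign(b)`. -/
noncomputable def csgn (z : ℂ) : ℂ :=
  ⟨Real.sign z.re, Real.sign z.im⟩

/-- The set `U = {1+i, 1-i, -1+i, -1-i}` of possible values of `csgn`. -/
noncomputable def signU : Finset ℂ :=
  {1 + Complex.I, 1 - Complex.I, -1 + Complex.I, -1 - Complex.I}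

namespace FGraph

variable {V : Type}

/-- The set of values of `sign(ψ - c)` attained on the finite vertex set `x`. -/
noncomputable def signValues (ψ : V → ℂ) (c : ℂ) (x : Finset V) : Finset ℂ :=
  x.image (fun v => csgn (ψ v - c))

/-- The level set `{ψ = c}` of a complex-valued function: the subgraph of the Barycentric
refinement induced by the simplices on which `sign(ψ - c)` takes at least three distinct
values, including `-1+i` and `1-i`. -/
noncomputable def complexLevelSet (G : FGraph V) (ψ : V → ℂ) (c : ℂ) : FGraph (Finset V) :=
  G.barycentric.induce (fun x =>
    3 ≤ (signValues ψ c x).card ∧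
    (-1 + Complex.I) ∈ signValues ψ c x ∧ (1 - Complex.I) ∈ signValues ψ c x)

/-- The level set `{ψ = 0}_e` for a two-element subset `e ⊆ U`: the subgraph of the
Barycentric refinement induced by the simplices on which `sign(ψ)` attains both values
of `e` and at least three distinct values in total. -/
noncomputable def complexLevelSetE (G : FGraph V) (ψ : V → ℂ) (e : Finset ℂ) :
    FGraph (Finset V) :=
  G.barycentric.induce (fun x =>
    (∀ u ∈ e, u ∈ signValues ψ 0 x) ∧ 3 ≤ (signValues ψ 0 x).card)

/-- `Ψ^{-1}(t)`: the subgraph of the Barycentric refinement induced by the simplices on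
which `sign(ψ)` attains all values of `t`. -/
noncomputable def signPreimage (G : FGraph V) (ψ : V → ℂ) (t : Finset ℂ) :
    FGraph (Finset V) :=
  G.barycentric.induce (fun x => ∀ u ∈ t, u ∈ signValues ψ 0 x)

/-- The sign vectors of `F - c` attained on the finite vertex set `x`. -/
noncomputable def vecSignValues {k : ℕ} (F : V → Fin k → ℝ) (c : Fin k → ℝ)
    (x : Finset V) : Finset (Fin k → ℝ) :=
  x.image (fun v j => Real.sign (F v j - c j))

/-- The level set `{F = c}` of an `ℝ^k`-valued function: the subgraph of the Barycentric
refinement induced by the simplices on which the sign vector of `F - c` takes at least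
`k+1` distinct values, including the `k` vectors `(1,…,1,-1,1,…,1)`. -/
noncomputable def vecLevelSet (G : FGraph V) {k : ℕ} (F : V → Fin k → ℝ) (c : Fin k → ℝ) :
    FGraph (Finset V) :=
  G.barycentric.induce (fun x =>
    k + 1 ≤ (vecSignValues F c x).card ∧
    ∀ j : Fin k, (fun i => if i = j then (-1 : ℝ) else 1) ∈ vecSignValues F c x)

end FGraph

/-- The complete graph on `Fin n`. -/
def completeFGraph (n : ℕ) : FGraph (Fin n) where
  verts := Finset.univ
  Adj a b := a ≠ b
  symm h := h.symm
  loopless a h := h rfl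
  mem_of_adj _ := Finset.mem_univ _

/-- Stirling numbers of the second kind. -/
def stirling2 : ℕ → ℕ → ℕ
  | 0, 0 => 1
  | 0, _ + 1 => 0
  | _ + 1, 0 => 0
  | n + 1, m + 1 => (m + 1) * stirling2 n (m + 1) + stirling2 n m

namespace FGraph

variable {V W : Type}

set_option maxHeartbeats 1000000

lemma ext' {G H : FGraph V} (hv : G.verts = H.verts)
    (ha : ∀ a b, G.Adj a b ↔ H.Adj a b) : G = H := by
  cases G; cases H
  simp only [mk.injEq]
  exact ⟨hv, by funext a b; exact propext (ha a b)⟩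

lemma mem_of_adj' {G : FGraph V} {a b : V} (h : G.Adj a b) : b ∈ G.verts :=
  G.mem_of_adj (G.symm h)

@[simp] lemma induce_verts (G : FGraph V) (P : V → Prop) :
    (G.induce P).verts = G.verts.filter P := rfl

@[simp] lemma induce_adj (G : FGraph V) (P : V → Prop) (a b : V) :
    (G.induce P).Adj a b ↔ (G.Adj a b ∧ P a ∧ P b) := Iff.rfl

lemma mem_induce_verts {G : FGraph V} {P : V → Prop} {a : V} :
    a ∈ (G.induce P).verts ↔ a ∈ G.verts ∧ P a := Finset.mem_filter

lemma mem_unitSphere {G : FGraph V} {v a : V} :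
    a ∈ (G.unitSphere v).verts ↔ a ∈ G.verts ∧ G.Adj v a := Finset.mem_filter

lemma unitSphere_adj {G : FGraph V} {v a b : V} :
    (G.unitSphere v).Adj a b ↔ G.Adj a b ∧ G.Adj v a ∧ G.Adj v b := Iff.rfl

lemma mem_erase_verts {G : FGraph V} {v a : V} :
    a ∈ (G.erase v).verts ↔ a ∈ G.verts ∧ a ≠ v := mem_induce_verts

lemma erase_adj {G : FGraph V} {v a b : V} :
    (G.erase v).Adj a b ↔ G.Adj a b ∧ a ≠ v ∧ b ≠ v := Iff.rfl

lemma Contractible.nonempty {G : FGraph V} (h : Contractible G) : G.verts.Nonempty := by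
  cases h with
  | single G v hv => exact ⟨v, hv ▸ Finset.mem_singleton_self v⟩
  | step G v hv _ _ => exact ⟨v, hv⟩

lemma IsManifold.nonneg {d : ℤ} {G : FGraph V} (h : IsManifold d G) : 0 ≤ d := by
  cases h with | intro d hd G h => exact hd

lemma IsSphere.neg_one_le {d : ℤ} {G : FGraph V} (h : IsSphere d G) : -1 ≤ d := by
  cases h with
  | empty => omega
  | punctured d G hm => have := hm.nonneg; omega

lemma IsSphere.verts_empty {G : FGraph V} (h : IsSphere (-1) G) : G.verts = ∅ := by
  cases h with
  | empty _ h => exact h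
  | punctured d G hm => have := hm.nonneg; omega

lemma IsSphere.manifold {d : ℤ} {G : FGraph V} (h : IsSphere d G) (hd : 0 ≤ d) :
    IsManifold d G := by
  cases h with
  | empty => omega
  | punctured d G hm => exact hm

/-- A graph with a dominating vertex is contractible. -/
lemma contractible_of_dominating_aux :
    ∀ n : ℕ, ∀ G : FGraph V, G.verts.card ≤ n →
    ∀ v ∈ G.verts, (∀ w ∈ G.verts, w ≠ v → G.Adj v w) → Contractible G := by
  intro n
  induction n with
  | zero =>
    intro G hc v hv _
    simp [Finset.card_eq_zero] at hc
    simp [hc] at hv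
  | succ n IH =>
    intro G hc v hv hdom
    by_cases hs : G.verts = {v}
    · exact Contractible.single G v hs
    · have hex : ∃ u ∈ G.verts, u ≠ v := by
        by_contra hno
        push_neg at hno
        exact hs (Finset.eq_singleton_iff_unique_mem.mpr ⟨hv, hno⟩)
      obtain ⟨u, hu, hune⟩ := hex
      have hadjuv : G.Adj u v := G.symm (hdom u hu hune)
      have hsub : ∀ (P : V → Prop), (G.induce P).verts.card ≤ n + 1 := by
        intro P
        exact le_trans (Finset.card_le_card (Finset.filter_subset _ _)) hc
      have hsubu : ∀ (P : V → Prop), ¬ P u → (G.induce P).verts.card ≤ n := by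
        intro P hPu
        have : (G.induce P).verts ⊆ G.verts.erase u := by
          intro x hx
          rw [mem_induce_verts] at hx
          refine Finset.mem_erase.mpr ⟨?_, hx.1⟩
          rintro rfl; exact hPu hx.2
        calc (G.induce P).verts.card ≤ (G.verts.erase u).card := Finset.card_le_card this
          _ = G.verts.card - 1 := Finset.card_erase_of_mem hu
          _ ≤ n := by omega
      refine Contractible.step G u hu ?_ ?_
      · refine IH _ (hsubu _ (G.loopless u)) v (mem_unitSphere.mpr ⟨hv, hadjuv⟩) ?_
        intro w hw hwv
        rw [mem_unitSphere] at hw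
        exact ⟨hdom w hw.1 hwv, hadjuv, hw.2⟩
      · refine IH _ (hsubu _ (by simp)) v (mem_erase_verts.mpr ⟨hv, Ne.symm hune⟩) ?_
        intro w hw hwv
        rw [mem_erase_verts] at hw
        exact ⟨hdom w hw.1 hwv, Ne.symm hune, hw.2⟩

lemma contractible_of_dominating {G : FGraph V} {v : V} (hv : v ∈ G.verts)
    (hdom : ∀ w ∈ G.verts, w ≠ v → G.Adj v w) : Contractible G :=
  contractible_of_dominating_aux G.verts.card G le_rfl v hv hdom

end FGraph
namespace FGraph
variable {V W : Type}

lemma iso_unitSphere {G : FGraph V} {H : FGraph W} {φ : V → W}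
    (hbij : Set.BijOn φ ↑G.verts ↑H.verts)
    (hadj : ∀ a ∈ G.verts, ∀ b ∈ G.verts, (G.Adj a b ↔ H.Adj (φ a) (φ b)))
    {v : V} (hv : v ∈ G.verts) :
    Iso (G.unitSphere v) (H.unitSphere (φ v)) := by
  refine ⟨φ, ⟨?_, ?_, ?_⟩, ?_⟩
  · intro a ha
    simp only [Finset.mem_coe, mem_unitSphere] at ha ⊢
    exact ⟨hbij.mapsTo ha.1, (hadj v hv a ha.1).mp ha.2⟩
  · refine hbij.injOn.mono ?_
    intro a ha
    simp only [Finset.mem_coe, mem_unitSphere] at ha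
    exact ha.1
  · intro b hb
    simp only [Finset.mem_coe, mem_unitSphere] at hb
    obtain ⟨a, ha, rfl⟩ := hbij.surjOn (Finset.mem_coe.mpr hb.1)
    simp only [Finset.mem_coe] at ha
    refine ⟨a, ?_, rfl⟩
    simp only [Finset.mem_coe, mem_unitSphere]
    exact ⟨ha, (hadj v hv a ha).mpr hb.2⟩
  · intro a ha b hb
    rw [mem_unitSphere] at ha hb
    rw [unitSphere_adj, unitSphere_adj]
    rw [hadj a ha.1 b hb.1, hadj v hv a ha.1, hadj v hv b hb.1]

lemma iso_erase {G : FGraph V} {H : FGraph W} {φ : V → W}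
    (hbij : Set.BijOn φ ↑G.verts ↑H.verts)
    (hadj : ∀ a ∈ G.verts, ∀ b ∈ G.verts, (G.Adj a b ↔ H.Adj (φ a) (φ b)))
    {v : V} (hv : v ∈ G.verts) :
    Iso (G.erase v) (H.erase (φ v)) := by
  have hne : ∀ a ∈ G.verts, (a ≠ v ↔ φ a ≠ φ v) := by
    intro a ha
    constructor
    · intro h he
      exact h (hbij.injOn (Finset.mem_coe.mpr ha) (Finset.mem_coe.mpr hv) he)
    · intro h he; exact h (by rw [he])
  refine ⟨φ, ⟨?_, ?_, ?_⟩, ?_⟩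
  · intro a ha
    simp only [Finset.mem_coe, mem_erase_verts] at ha ⊢
    exact ⟨hbij.mapsTo ha.1, (hne a ha.1).mp ha.2⟩
  · refine hbij.injOn.mono ?_
    intro a ha
    simp only [Finset.mem_coe, mem_erase_verts] at ha
    exact ha.1
  · intro b hb
    simp only [Finset.mem_coe, mem_erase_verts] at hb
    obtain ⟨a, ha, rfl⟩ := hbij.surjOn (Finset.mem_coe.mpr hb.1)
    simp only [Finset.mem_coe] at ha
    refine ⟨a, ?_, rfl⟩
    simp only [Finset.mem_coe, mem_erase_verts]
    exact ⟨ha, (hne a ha).mpr hb.2⟩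
  · intro a ha b hb
    rw [mem_erase_verts] at ha hb
    rw [erase_adj, erase_adj]
    rw [hadj a ha.1 b hb.1, hne a ha.1, hne b hb.1]

lemma Contractible.of_iso {G : FGraph V} (h : Contractible G) :
    ∀ {W : Type} (H : FGraph W), Iso G H → Contractible H := by
  induction h with
  | single G v hv =>
    intro W H hiso
    obtain ⟨φ, hbij, _⟩ := hiso
    refine Contractible.single H (φ v) ?_
    apply Finset.coe_injective
    rw [← hbij.image_eq, hv]
    simp
  | step G v hv h1 h2 IH1 IH2 =>
    intro W H hiso
    obtain ⟨φ, hbij, hadj⟩ := hiso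
    refine Contractible.step H (φ v) (hbij.mapsTo (Finset.mem_coe.mpr hv)) ?_ ?_
    · exact IH1 _ (iso_unitSphere hbij hadj hv)
    · exact IH2 _ (iso_erase hbij hadj hv)

lemma isoAux : ∀ n : ℕ, ∀ d : ℤ, d ≤ n → ∀ {V W : Type} {G : FGraph V} {H : FGraph W},
    Iso G H → ((IsSphere (d-1) G → IsSphere (d-1) H) ∧
      (IsManifold d G → IsManifold d H)) := by
  intro n
  induction n with
  | zero =>
    intro d hd V W G H hiso
    constructor
    · intro hs
      have h1 := hs.neg_one_le
      have hd1 : d - 1 = -1 := by omega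
      rw [hd1] at hs ⊢
      obtain ⟨φ, hbij, _⟩ := hiso
      refine IsSphere.empty H ?_
      have := hs.verts_empty
      apply Finset.coe_injective
      rw [← hbij.image_eq, this]; simp
    · intro hm
      have h0 := hm.nonneg
      have hd0 : d = 0 := by omega
      subst hd0
      cases hm with
      | intro d hd0' G h =>
        obtain ⟨φ, hbij, hadj⟩ := hiso
        refine IsManifold.intro 0 le_rfl H ?_
        intro w hw
        obtain ⟨a, ha, rfl⟩ := hbij.surjOn (Finset.mem_coe.mpr hw)
        simp only [Finset.mem_coe] at ha
        have hs := h a ha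
        have : (0:ℤ) - 1 = -1 := by norm_num
        rw [this] at hs ⊢
        refine IsSphere.empty _ ?_
        have he := hs.verts_empty
        obtain ⟨ψ, hbij2, _⟩ := iso_unitSphere hbij hadj ha
        apply Finset.coe_injective
        rw [← hbij2.image_eq, he]; simp
  | succ n IH =>
    intro d hd V W G H hiso
    by_cases hdn : d ≤ n
    · exact IH d hdn hiso
    · have sph : ∀ {V' W' : Type} {G' : FGraph V'} {H' : FGraph W'},
          Iso G' H' → IsSphere (d-1) G' → IsSphere (d-1) H' := by
        intro V' W' G' H' hiso' hs
        generalize hE : d - 1 = e at hs ⊢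
        cases hs with
        | empty _ he =>
          obtain ⟨φ, hbij, _⟩ := hiso'
          refine IsSphere.empty H' ?_
          apply Finset.coe_injective
          rw [← hbij.image_eq, he]; simp
        | punctured d' G' hm v hv hc =>
          obtain ⟨φ, hbij, hadj⟩ := hiso'
          have hm' : IsManifold e H' := by
            have h0 := hm.nonneg
            refine (IH e (by omega) ⟨φ, hbij, hadj⟩).2 hm
          exact IsSphere.punctured e H' hm' (φ v) (hbij.mapsTo (Finset.mem_coe.mpr hv))
            (hc.of_iso _ (iso_erase hbij hadj hv))
      refine ⟨sph hiso, ?_⟩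
      intro hm
      cases hm with
      | intro d hd0 G h =>
        obtain ⟨φ, hbij, hadj⟩ := hiso
        refine IsManifold.intro d hd0 H ?_
        intro w hw
        obtain ⟨a, ha, rfl⟩ := hbij.surjOn (Finset.mem_coe.mpr hw)
        simp only [Finset.mem_coe] at ha
        exact sph (iso_unitSphere hbij hadj ha) (h a ha)

lemma IsManifold.of_iso {d : ℤ} {G : FGraph V} {H : FGraph W} (h : IsManifold d G)
    (hiso : Iso G H) : IsManifold d H := by
  have h0 := h.nonneg
  exact (isoAux d.toNat d (by omega) hiso).2 h

lemma IsSphere.of_iso {d : ℤ} {G : FGraph V} {H : FGraph W} (h : IsSphere d G)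
    (hiso : Iso G H) : IsSphere d H := by
  have h0 := h.neg_one_le
  have : d = (d + 1) - 1 := by ring
  rw [this] at h ⊢
  exact (isoAux (d+1).toNat (d+1) (by omega) hiso).1 h

end FGraph
namespace FGraph
variable {V W : Type}

@[simp] lemma join_verts (G : FGraph V) (H : FGraph W) :
    (G.join H).verts = G.verts.disjSum H.verts := rfl

lemma join_adj_ll {G : FGraph V} {H : FGraph W} {a b : V} :
    (G.join H).Adj (Sum.inl a) (Sum.inl b) ↔ G.Adj a b := Iff.rfl

lemma join_adj_rr {G : FGraph V} {H : FGraph W} {a b : W} :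
    (G.join H).Adj (Sum.inr a) (Sum.inr b) ↔ H.Adj a b := Iff.rfl

lemma join_adj_lr {G : FGraph V} {H : FGraph W} {a : V} {b : W} :
    (G.join H).Adj (Sum.inl a) (Sum.inr b) ↔ a ∈ G.verts ∧ b ∈ H.verts := Iff.rfl

lemma join_adj_rl {G : FGraph V} {H : FGraph W} {a : W} {b : V} :
    (G.join H).Adj (Sum.inr a) (Sum.inl b) ↔ b ∈ G.verts ∧ a ∈ H.verts := Iff.rfl

lemma join_unitSphere_inl (G : FGraph V) (H : FGraph W) (v : V) (hv : v ∈ G.verts) :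
    (G.join H).unitSphere (Sum.inl v) = (G.unitSphere v).join H := by
  apply ext'
  · ext x
    cases x with
    | inl a =>
      simp only [unitSphere, induce_verts, Finset.mem_filter, join_verts,
        Finset.inl_mem_disjSum, join_adj_ll]
      try tauto
    | inr b =>
      simp only [unitSphere, induce_verts, Finset.mem_filter, join_verts,
        Finset.inr_mem_disjSum, join_adj_lr]
      try tauto
  · intro x y
    cases x with
    | inl a =>
      cases y with
      | inl b => exact Iff.rfl
      | inr b =>
        simp only [unitSphere_adj, join_adj_ll, join_adj_lr, mem_unitSphere]
        have h1 : G.Adj v a → a ∈ G.verts := fun h => mem_of_adj' h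
        try tauto
    | inr a =>
      cases y with
      | inl b =>
        simp only [unitSphere_adj, join_adj_ll, join_adj_lr, join_adj_rl, mem_unitSphere]
        have h1 : G.Adj v b → b ∈ G.verts := fun h => mem_of_adj' h
        try tauto
      | inr b =>
        simp only [unitSphere_adj, join_adj_lr, join_adj_rr, mem_unitSphere]
        have h1 : H.Adj a b → a ∈ H.verts := fun h => H.mem_of_adj h
        have h2 : H.Adj a b → b ∈ H.verts := fun h => mem_of_adj' h
        try tauto

lemma join_unitSphere_inr (G : FGraph V) (H : FGraph W) (w : W) (hw : w ∈ H.verts) :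
    (G.join H).unitSphere (Sum.inr w) = G.join (H.unitSphere w) := by
  apply ext'
  · ext x
    cases x with
    | inl a =>
      simp only [unitSphere, induce_verts, Finset.mem_filter, join_verts,
        Finset.inl_mem_disjSum, join_adj_rl]
      try tauto
    | inr b =>
      simp only [unitSphere, induce_verts, Finset.mem_filter, join_verts,
        Finset.inr_mem_disjSum, join_adj_rr]
      try tauto
  · intro x y
    cases x with
    | inl a =>
      cases y with
      | inl b =>
        simp only [unitSphere_adj, join_adj_ll, join_adj_rl, mem_unitSphere]
        have h1 : G.Adj a b → a ∈ G.verts := fun h => G.mem_of_adj h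
        have h2 : G.Adj a b → b ∈ G.verts := fun h => mem_of_adj' h
        try tauto
      | inr b =>
        simp only [unitSphere_adj, join_adj_lr, join_adj_rl, join_adj_rr, mem_unitSphere]
        have h1 : H.Adj w b → b ∈ H.verts := fun h => mem_of_adj' h
        try tauto
    | inr a =>
      cases y with
      | inl b =>
        simp only [unitSphere_adj, join_adj_rl, join_adj_rr, join_adj_lr, mem_unitSphere]
        have h1 : H.Adj w a → a ∈ H.verts := fun h => mem_of_adj' h
        try tauto
      | inr b => exact Iff.rfl

lemma join_erase_inl (G : FGraph V) (H : FGraph W) (v : V) :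
    (G.join H).erase (Sum.inl v) = (G.erase v).join H := by
  apply ext'
  · ext x
    cases x with
    | inl a =>
      simp only [erase, induce_verts, Finset.mem_filter, join_verts,
        Finset.inl_mem_disjSum, ne_eq, Sum.inl.injEq]
      try tauto
    | inr b =>
      simp only [erase, induce_verts, Finset.mem_filter, join_verts,
        Finset.inr_mem_disjSum, ne_eq]
      try tauto
  · intro x y
    cases x <;> cases y <;>
      rename_i a b <;>
      simp only [erase_adj, join_adj_ll, join_adj_lr, join_adj_rl, join_adj_rr,
        mem_erase_verts, ne_eq, Sum.inl.injEq, reduceCtorEq, not_false_eq_true,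
        and_true, true_and] <;> try tauto

lemma join_erase_inr (G : FGraph V) (H : FGraph W) (w : W) :
    (G.join H).erase (Sum.inr w) = G.join (H.erase w) := by
  apply ext'
  · ext x
    cases x with
    | inl a =>
      simp only [erase, induce_verts, Finset.mem_filter, join_verts,
        Finset.inl_mem_disjSum, ne_eq]
      try tauto
    | inr b =>
      simp only [erase, induce_verts, Finset.mem_filter, join_verts,
        Finset.inr_mem_disjSum, ne_eq, Sum.inr.injEq]
      try tauto
  · intro x y
    cases x <;> cases y <;>
      rename_i a b <;>
      simp only [erase_adj, join_adj_ll, join_adj_lr, join_adj_rl, join_adj_rr,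
        mem_erase_verts, ne_eq, Sum.inr.injEq, reduceCtorEq, not_false_eq_true,
        and_true, true_and] <;> try tauto

lemma Contractible.join_left {G : FGraph V} (h : Contractible G) (H : FGraph W) :
    Contractible (G.join H) := by
  induction h with
  | single G v hv =>
    refine contractible_of_dominating (v := Sum.inl v) ?_ ?_
    · simp [hv]
    · intro w hw hne
      cases w with
      | inl a =>
        simp only [join_verts, Finset.inl_mem_disjSum, hv, Finset.mem_singleton] at hw
        subst hw; simp at hne
      | inr b =>
        simp only [join_verts, Finset.inr_mem_disjSum] at hw
        exact join_adj_lr.mpr ⟨by simp [hv], hw⟩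
  | step G v hv h1 h2 IH1 IH2 =>
    refine Contractible.step _ (Sum.inl v) (by simp [hv]) ?_ ?_
    · rw [join_unitSphere_inl G H v hv]; exact IH1
    · rw [join_erase_inl]; exact IH2

lemma Contractible.join_right (G : FGraph V) {H : FGraph W} (h : Contractible H) :
    Contractible (G.join H) := by
  induction h with
  | single H w hw =>
    refine contractible_of_dominating (v := Sum.inr w) ?_ ?_
    · simp [hw]
    · intro x hx hne
      cases x with
      | inr b =>
        simp only [join_verts, Finset.inr_mem_disjSum, hw, Finset.mem_singleton] at hx
        subst hx; simp at hne
      | inl a =>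
        simp only [join_verts, Finset.inl_mem_disjSum] at hx
        exact join_adj_rl.mpr ⟨hx, by simp [hw]⟩
  | step H w hw h1 h2 IH1 IH2 =>
    refine Contractible.step _ (Sum.inr w) (by simp [hw]) ?_ ?_
    · rw [join_unitSphere_inr G H w hw]; exact IH1
    · rw [join_erase_inr]; exact IH2

lemma iso_join_left_empty (G : FGraph V) (H : FGraph W) (h : G.verts = ∅) :
    Iso H (G.join H) := by
  refine ⟨Sum.inr, ⟨?_, ?_, ?_⟩, ?_⟩
  · intro b hb
    simp only [Finset.mem_coe, join_verts, Finset.inr_mem_disjSum] at hb ⊢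
    exact hb
  · intro a _ b _ hab; exact Sum.inr.inj hab
  · intro x hx
    cases x with
    | inl a =>
      exfalso
      simp only [join_verts, Finset.mem_coe, Finset.inl_mem_disjSum, h] at hx
      exact absurd hx (Finset.notMem_empty a)
    | inr b =>
      simp only [join_verts, Finset.mem_coe, Finset.inr_mem_disjSum] at hx
      exact ⟨b, hx, rfl⟩
  · intro a _ b _; exact join_adj_rr.symm

lemma iso_join_right_empty (G : FGraph V) (H : FGraph W) (h : H.verts = ∅) :
    Iso G (G.join H) := by
  refine ⟨Sum.inl, ⟨?_, ?_, ?_⟩, ?_⟩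
  · intro b hb
    simp only [Finset.mem_coe, join_verts, Finset.inl_mem_disjSum] at hb ⊢
    exact hb
  · intro a _ b _ hab; exact Sum.inl.inj hab
  · intro x hx
    cases x with
    | inr a =>
      exfalso
      simp only [join_verts, Finset.mem_coe, Finset.inr_mem_disjSum, h] at hx
      exact absurd hx (Finset.notMem_empty a)
    | inl b =>
      simp only [join_verts, Finset.mem_coe, Finset.inl_mem_disjSum] at hx
      exact ⟨b, hx, rfl⟩
  · intro a _ b _; exact join_adj_ll.symm

lemma join_sphere_aux : ∀ n : ℕ, ∀ p q : ℤ, p + q + 2 ≤ n →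
    ∀ {V W : Type} (G : FGraph V) (H : FGraph W), IsSphere p G → IsSphere q H →
    IsSphere (p + q + 1) (G.join H) := by
  intro n
  induction n with
  | zero =>
    intro p q hn V W G H hG hH
    have h1 := hG.neg_one_le; have h2 := hH.neg_one_le
    have hp : p = -1 := by omega
    have hq : q = -1 := by omega
    subst hp; subst hq
    have hGe := hG.verts_empty
    have hHe := hH.verts_empty
    have he : (-1 : ℤ) + -1 + 1 = -1 := by ring
    rw [he]
    refine IsSphere.empty _ ?_
    ext x
    cases x <;> simp [hGe, hHe]
  | succ n IH =>
    intro p q hn V W G H hG hH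
    cases hG with
    | empty _ hGe =>
      have he : (-1 : ℤ) + q + 1 = q := by ring
      rw [he]
      exact hH.of_iso (iso_join_left_empty G H hGe)
    | punctured p G hGm v hv hGc =>
      cases hH with
      | empty _ hHe =>
        have he : p + (-1) + 1 = p := by ring
        rw [he]
        exact (IsSphere.punctured p G hGm v hv hGc).of_iso (iso_join_right_empty G H hHe)
      | punctured q H hHm w hw hHc =>
        have hp := hGm.nonneg; have hq := hHm.nonneg
        have hmani : IsManifold (p + q + 1) (G.join H) := by
          refine IsManifold.intro _ (by omega) _ ?_
          intro x hx
          cases x with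
          | inl a =>
            simp only [join_verts, Finset.inl_mem_disjSum] at hx
            rw [join_unitSphere_inl G H a hx]
            have hsa : IsSphere (p - 1) (G.unitSphere a) := by
              cases hGm with | intro _ _ _ h => exact h a hx
            have he : (p - 1) + q + 1 = p + q + 1 - 1 := by ring
            rw [← he]
            exact IH (p-1) q (by omega) _ _ hsa (IsSphere.punctured q H hHm w hw hHc)
          | inr b =>
            simp only [join_verts, Finset.inr_mem_disjSum] at hx
            rw [join_unitSphere_inr G H b hx]
            have hsb : IsSphere (q - 1) (H.unitSphere b) := by
              cases hHm with | intro _ _ _ h => exact h b hx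
            have he : p + (q - 1) + 1 = p + q + 1 - 1 := by ring
            rw [← he]
            exact IH p (q-1) (by omega) _ _ (IsSphere.punctured p G hGm v hv hGc) hsb
        refine IsSphere.punctured _ _ hmani (Sum.inl v) (by simp [hv]) ?_
        rw [join_erase_inl]
        exact hGc.join_left H

lemma join_sphere {p q : ℤ} {G : FGraph V} {H : FGraph W} (hG : IsSphere p G)
    (hH : IsSphere q H) : IsSphere (p + q + 1) (G.join H) := by
  have h1 := hG.neg_one_le; have h2 := hH.neg_one_le
  exact join_sphere_aux (p+q+2).toNat p q (by omega) G H hG hH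

end FGraph
namespace FGraph
variable {V W : Type}

/-- Splitting a graph along a predicate `P` such that all cross edges are present. -/
lemma iso_split (K : FGraph V) (P : V → Prop)
    (h : ∀ a ∈ K.verts, ∀ b ∈ K.verts, P a → ¬ P b → K.Adj a b) :
    Iso ((K.induce P).join (K.induce (fun x => ¬ P x))) K := by
  refine ⟨Sum.elim id id, ⟨?_, ?_, ?_⟩, ?_⟩
  · intro x hx
    cases x with
    | inl a =>
      simp only [Finset.mem_coe, join_verts, Finset.inl_mem_disjSum, mem_induce_verts] at hx
      simpa using hx.1
    | inr a =>
      simp only [Finset.mem_coe, join_verts, Finset.inr_mem_disjSum, mem_induce_verts] at hx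
      simpa using hx.1
  · intro x hx y hy hxy
    cases x <;> cases y <;>
      simp only [Finset.mem_coe, join_verts, Finset.inl_mem_disjSum,
        Finset.inr_mem_disjSum, mem_induce_verts, Sum.elim_inl, Sum.elim_inr, id] at hx hy hxy
    · exact congrArg Sum.inl hxy
    · exact absurd (hxy ▸ hx.2) hy.2
    · exact absurd (hxy ▸ hy.2) hx.2
    · exact congrArg Sum.inr hxy
  · intro a ha
    simp only [Finset.mem_coe] at ha
    by_cases hP : P a
    · exact ⟨Sum.inl a, by simp [mem_induce_verts, ha, hP], rfl⟩
    · exact ⟨Sum.inr a, by simp [mem_induce_verts, ha, hP], rfl⟩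
  · intro x hx y hy
    cases x <;> cases y <;>
      simp only [Finset.mem_coe, join_verts, Finset.inl_mem_disjSum,
        Finset.inr_mem_disjSum, mem_induce_verts, Sum.elim_inl, Sum.elim_inr, id] at hx hy ⊢ <;>
      rename_i a b
    · rw [join_adj_ll, induce_adj]; tauto
    · rw [join_adj_lr]
      simp only [mem_induce_verts]
      exact iff_of_true ⟨⟨hx.1, hx.2⟩, ⟨hy.1, hy.2⟩⟩ (h a hx.1 b hy.1 hx.2 hy.2)
    · rw [join_adj_rl]
      simp only [mem_induce_verts]
      exact iff_of_true ⟨⟨hy.1, hy.2⟩, ⟨hx.1, hx.2⟩⟩ (K.symm (h b hy.1 a hx.1 hy.2 hx.2))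
    · rw [join_adj_rr, induce_adj]; tauto

/-- The graph of nonempty faces of the cone with apex `a0` over the boundary of `F`,
with a set `T` of faces removed. -/
noncomputable def coneG (a0 : V) (F : Finset V) (T : Finset (Finset V)) :
    FGraph (Finset V) where
  verts := (insert a0 F).powerset.filter (fun z => z.Nonempty ∧ ¬ F ⊆ z ∧ z ∉ T)
  Adj y z := (y ⊆ insert a0 F ∧ y.Nonempty ∧ ¬ F ⊆ y ∧ y ∉ T) ∧
             (z ⊆ insert a0 F ∧ z.Nonempty ∧ ¬ F ⊆ z ∧ z ∉ T) ∧ (y ⊂ z ∨ z ⊂ y)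
  symm h := ⟨h.2.1, h.1, h.2.2.symm⟩
  loopless z h := by rcases h.2.2 with h' | h' <;> exact ssubset_irrefl _ h'
  mem_of_adj h := Finset.mem_filter.mpr ⟨Finset.mem_powerset.mpr h.1.1, h.1.2⟩

lemma mem_coneG {a0 : V} {F : Finset V} {T : Finset (Finset V)} {z : Finset V} :
    z ∈ (coneG a0 F T).verts ↔ z ⊆ insert a0 F ∧ z.Nonempty ∧ ¬ F ⊆ z ∧ z ∉ T := by
  simp only [coneG, Finset.mem_filter, Finset.mem_powerset]

lemma coneG_adj {a0 : V} {F : Finset V} {T : Finset (Finset V)} {y z : Finset V} :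
    (coneG a0 F T).Adj y z ↔ y ∈ (coneG a0 F T).verts ∧ z ∈ (coneG a0 F T).verts ∧
      (y ⊂ z ∨ z ⊂ y) := by
  rw [mem_coneG, mem_coneG]; exact Iff.rfl

lemma coneG_adj' {a0 : V} {F : Finset V} {T : Finset (Finset V)} {y z : Finset V} :
    (coneG a0 F T).Adj y z ↔ (y ⊆ insert a0 F ∧ y.Nonempty ∧ ¬ F ⊆ y ∧ y ∉ T) ∧
      (z ⊆ insert a0 F ∧ z.Nonempty ∧ ¬ F ⊆ z ∧ z ∉ T) ∧ (y ⊂ z ∨ z ⊂ y) := Iff.rfl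

/-- If no `a0`-free faces remain, the apex singleton dominates the cone graph. -/
lemma coneG_apex_dominated {F : Finset V} (a0 : V) (ha0 : a0 ∉ F) (hF : F.Nonempty)
    (T : Finset (Finset V)) (hT1 : ∀ t ∈ T, t ⊆ F)
    (hS : F.powerset.filter (fun z => z.Nonempty ∧ z ≠ F ∧ z ∉ T) = ∅) :
    Contractible (coneG a0 F T) := by
  have ha0v : {a0} ∈ (coneG a0 F T).verts := by
    rw [mem_coneG]
    refine ⟨Finset.singleton_subset_iff.mpr (Finset.mem_insert_self a0 F),
      Finset.singleton_nonempty a0, ?_, ?_⟩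
    · intro hsub
      obtain ⟨x, hx⟩ := hF
      have := hsub hx
      rw [Finset.mem_singleton] at this
      exact ha0 (this ▸ hx)
    · intro hT
      exact ha0 (hT1 _ hT (Finset.mem_singleton_self a0))
  refine contractible_of_dominating ha0v ?_
  intro w hw hne
  have hw' := hw
  rw [mem_coneG] at hw'
  by_cases ha0w : a0 ∈ w
  · rw [coneG_adj]
    refine ⟨ha0v, hw, Or.inl ?_⟩
    rw [Finset.ssubset_iff_subset_ne]
    exact ⟨Finset.singleton_subset_iff.mpr ha0w, Ne.symm hne⟩
  · exfalso
    have hwF : w ⊆ F := by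
      intro x hx
      rcases Finset.mem_insert.mp (hw'.1 hx) with h | h
      · exact absurd (h ▸ hx) ha0w
      · exact h
    have : w ∈ F.powerset.filter (fun z => z.Nonempty ∧ z ≠ F ∧ z ∉ T) := by
      rw [Finset.mem_filter, Finset.mem_powerset]
      refine ⟨hwF, hw'.2.1, ?_, hw'.2.2.2⟩
      rintro rfl
      exact hw'.2.2.1 le_rfl
    rw [hS] at this
    exact absurd this (Finset.notMem_empty w)

lemma coneG_contractible_aux {F : Finset V} (a0 : V) (ha0 : a0 ∉ F) (hF : F.Nonempty) :
    ∀ N : ℕ, ∀ T : Finset (Finset V),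
    (F.powerset.filter (fun z => z.Nonempty ∧ z ≠ F ∧ z ∉ T)).card ≤ N →
    (∀ t ∈ T, t ⊆ F) →
    (∀ t ∈ T, ∀ z, t ⊂ z → z ⊂ F → z ∈ T) →
    Contractible (coneG a0 F T) := by
  intro N
  induction N with
  | zero =>
    intro T hcard hT1 hT2
    refine coneG_apex_dominated a0 ha0 hF T hT1 ?_
    rw [← Finset.card_eq_zero]; omega
  | succ N IH =>
    intro T hcard hT1 hT2
    set S := F.powerset.filter (fun z => z.Nonempty ∧ z ≠ F ∧ z ∉ T) with hSdef
    by_cases hS : S = ∅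
    · exact coneG_apex_dominated a0 ha0 hF T hT1 hS
    · have hSne : S.Nonempty := Finset.nonempty_iff_ne_empty.mpr hS
      obtain ⟨z0, hz0S, hz0max⟩ := S.exists_max_image Finset.card hSne
      have hz0 : z0 ⊆ F ∧ z0.Nonempty ∧ z0 ≠ F ∧ z0 ∉ T := by
        have h := hz0S
        rw [hSdef, Finset.mem_filter, Finset.mem_powerset] at h
        tauto
      have hz0v : z0 ∈ (coneG a0 F T).verts := by
        rw [mem_coneG]
        refine ⟨hz0.1.trans (Finset.subset_insert a0 F), hz0.2.1, ?_, hz0.2.2.2⟩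
        intro h
        exact hz0.2.2.1 (Finset.Subset.antisymm hz0.1 h)
      have hz0F : z0 ⊂ F := Finset.ssubset_iff_subset_ne.mpr ⟨hz0.1, hz0.2.2.1⟩
      have ha0z0 : a0 ∉ z0 := fun h => ha0 (hz0.1 h)
      have hmax : ∀ z, z0 ⊂ z → z ⊂ F → z ∈ T := by
        intro z hz1 hz2
        by_contra hzT
        have hzS : z ∈ S := by
          rw [hSdef, Finset.mem_filter, Finset.mem_powerset]
          exact ⟨hz2.subset, hz0.2.1.mono hz1.subset,
            fun h => (ssubset_irrefl F (h ▸ hz2)), hzT⟩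
        have h1 := hz0max z hzS
        have h2 := Finset.card_lt_card hz1
        omega
      refine Contractible.step _ z0 hz0v ?_ ?_
      · -- the unit sphere of z0 is contractible
        set K := (coneG a0 F T).unitSphere z0 with hK
        have hcross : ∀ a ∈ K.verts, ∀ b ∈ K.verts, (a ⊂ z0) → ¬ (b ⊂ z0) → K.Adj a b := by
          intro a haK b hbK ha hb
          rw [hK, mem_unitSphere] at haK hbK
          obtain ⟨haV, haA⟩ := haK
          obtain ⟨hbV, hbA⟩ := hbK
          have hzb : z0 ⊂ b := ((coneG_adj.mp hbA).2.2).resolve_right hb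
          rw [hK, unitSphere_adj]
          exact ⟨coneG_adj.mpr ⟨(coneG_adj.mp haA).2.1, (coneG_adj.mp hbA).2.1,
            Or.inl (ha.trans hzb)⟩, haA, hbA⟩
        refine Contractible.of_iso ?_ _ (iso_split K (fun y => y ⊂ z0) hcross)
        refine Contractible.join_right _ ?_
        set w0 : Finset V := insert a0 z0 with hw0
        have hz0w0 : z0 ⊂ w0 := Finset.ssubset_insert ha0z0
        have hw0V : w0 ∈ (coneG a0 F T).verts := by
          rw [mem_coneG]
          refine ⟨Finset.insert_subset_insert a0 hz0.1, Finset.insert_nonempty a0 z0, ?_, ?_⟩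
          · intro h
            have hFz : F ⊆ z0 := by
              intro x hx
              rcases Finset.mem_insert.mp (h hx) with he | he
              · exact absurd (he ▸ hx) ha0
              · exact he
            exact (mem_coneG.mp hz0v).2.2.1 hFz
          · intro h
            exact ha0 (hT1 _ h (Finset.mem_insert_self a0 z0))
        have hKw0 : w0 ∈ K.verts := by
          rw [hK, mem_unitSphere]
          exact ⟨hw0V, coneG_adj.mpr ⟨hz0v, hw0V, Or.inl hz0w0⟩⟩
        have hw0U : w0 ∈ (K.induce (fun y => ¬ y ⊂ z0)).verts := by
          rw [mem_induce_verts]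
          exact ⟨hKw0, fun h => (ssubset_irrefl z0) (hz0w0.trans h)⟩
        refine contractible_of_dominating hw0U ?_
        intro y hy hne
        rw [mem_induce_verts] at hy
        obtain ⟨hyK, hyP⟩ := hy
        have hyK' := hyK
        rw [hK, mem_unitSphere] at hyK'
        obtain ⟨hyV, hyA⟩ := hyK'
        have hzy : z0 ⊂ y := ((coneG_adj.mp hyA).2.2).resolve_right hyP
        have ha0y : a0 ∈ y := by
          by_contra ha0y
          have hyV' := mem_coneG.mp hyV
          have hyF : y ⊆ F := by
            intro x hx
            rcases Finset.mem_insert.mp (hyV'.1 hx) with he | he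
            · exact absurd (he ▸ hx) ha0y
            · exact he
          have : y ⊂ F := Finset.ssubset_iff_subset_ne.mpr
            ⟨hyF, fun h => hyV'.2.2.1 (h ▸ le_rfl)⟩
          exact hyV'.2.2.2 (hmax y hzy this)
        have hw0y : w0 ⊂ y := by
          rw [Finset.ssubset_iff_subset_ne]
          exact ⟨Finset.insert_subset ha0y hzy.subset, Ne.symm hne⟩
        rw [induce_adj]
        refine ⟨?_, fun h => (ssubset_irrefl z0) (hz0w0.trans h), hyP⟩
        rw [hK, unitSphere_adj]
        exact ⟨coneG_adj.mpr ⟨hw0V, hyV, Or.inl hw0y⟩,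
          coneG_adj.mpr ⟨hz0v, hw0V, Or.inl hz0w0⟩, hyA⟩
      · -- removing z0 yields the cone graph with z0 added to T
        have herase : (coneG a0 F T).erase z0 = coneG a0 F (insert z0 T) := by
          apply ext'
          · ext z
            rw [mem_erase_verts, mem_coneG, mem_coneG, Finset.mem_insert]
            tauto
          · intro a b
            rw [erase_adj, coneG_adj', coneG_adj', Finset.mem_insert, Finset.mem_insert]
            constructor
            · rintro ⟨⟨ha, hb, hor⟩, hane, hbne⟩
              exact ⟨⟨ha.1, ha.2.1, ha.2.2.1, fun h => h.elim hane ha.2.2.2⟩,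
                ⟨hb.1, hb.2.1, hb.2.2.1, fun h => h.elim hbne hb.2.2.2⟩, hor⟩
            · rintro ⟨⟨ha1, ha2, ha3, ha4⟩, ⟨hb1, hb2, hb3, hb4⟩, hor⟩
              exact ⟨⟨⟨ha1, ha2, ha3, fun h => ha4 (Or.inr h)⟩,
                ⟨hb1, hb2, hb3, fun h => hb4 (Or.inr h)⟩, hor⟩,
                fun h => ha4 (Or.inl h), fun h => hb4 (Or.inl h)⟩
        rw [herase]
        refine IH (insert z0 T) ?_ ?_ ?_
        · have hSeq : F.powerset.filter (fun z => z.Nonempty ∧ z ≠ F ∧ z ∉ insert z0 T)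
              = S.erase z0 := by
            ext z
            simp only [Finset.mem_erase, hSdef, Finset.mem_filter, Finset.mem_powerset,
              Finset.mem_insert]
            tauto
          rw [hSeq, Finset.card_erase_of_mem hz0S]
          omega
        · intro t ht
          rcases Finset.mem_insert.mp ht with h | h
          · exact h ▸ hz0.1
          · exact hT1 t h
        · intro t ht z h1 h2
          rcases Finset.mem_insert.mp ht with h | h
          · exact Finset.mem_insert_of_mem (hmax z (h ▸ h1) h2)
          · exact Finset.mem_insert_of_mem (hT2 t h z h1 h2)

end FGraph
namespace FGraph
variable {V W : Type}

lemma union_subset_union_iff_right {y a b : Finset V} (hd : Disjoint y a) :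
    y ∪ a ⊆ y ∪ b ↔ a ⊆ b := by
  constructor
  · intro hab x hx
    have hxy : x ∉ y := fun hxy => (Finset.disjoint_left.mp hd hxy) hx
    rcases Finset.mem_union.mp (hab (Finset.mem_union_right y hx)) with h | h
    · exact absurd h hxy
    · exact h
  · intro h
    exact Finset.union_subset_union_right h

lemma union_ssubset_union_iff_right {y a b : Finset V} (hda : Disjoint y a)
    (hdb : Disjoint y b) : y ∪ a ⊂ y ∪ b ↔ a ⊂ b := by
  rw [Finset.ssubset_iff_subset_ne, Finset.ssubset_iff_subset_ne,
    union_subset_union_iff_right hda]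
  constructor
  · rintro ⟨h1, h2⟩
    exact ⟨h1, fun he => h2 (by rw [he])⟩
  · rintro ⟨h1, h2⟩
    refine ⟨h1, fun he => h2 ?_⟩
    have := congrArg (fun t => t \ y) he
    simpa [Finset.union_sdiff_cancel_left hda, Finset.union_sdiff_cancel_left hdb] using this

lemma sdiff_subset_sdiff_iff' {s a b : Finset V} (ha : a ⊆ s) (hb : b ⊆ s) :
    s \ b ⊆ s \ a ↔ a ⊆ b := by
  constructor
  · intro h x hx
    by_contra hxb
    have : x ∈ s \ b := Finset.mem_sdiff.mpr ⟨ha hx, hxb⟩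
    exact (Finset.mem_sdiff.mp (h this)).2 hx
  · intro h x hx
    rw [Finset.mem_sdiff] at hx ⊢
    exact ⟨hx.1, fun hxa => hx.2 (h hxa)⟩

lemma sdiff_ssubset_sdiff_iff' {s a b : Finset V} (ha : a ⊆ s) (hb : b ⊆ s) :
    s \ b ⊂ s \ a ↔ a ⊂ b := by
  rw [Finset.ssubset_def, Finset.ssubset_def, sdiff_subset_sdiff_iff' ha hb,
    sdiff_subset_sdiff_iff' hb ha]

/-- The boundary complex of the simplex on vertex set `s`. -/
noncomputable def bdry (s : Finset V) : FGraph (Finset V) where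
  verts := s.powerset.filter (fun y => y.Nonempty ∧ y ≠ s)
  Adj y z := (y.Nonempty ∧ y ⊂ s) ∧ (z.Nonempty ∧ z ⊂ s) ∧ (y ⊂ z ∨ z ⊂ y)
  symm h := ⟨h.2.1, h.1, h.2.2.symm⟩
  loopless y h := by rcases h.2.2 with h' | h' <;> exact ssubset_irrefl _ h'
  mem_of_adj h := Finset.mem_filter.mpr ⟨Finset.mem_powerset.mpr h.1.2.subset,
    h.1.1, (Finset.ssubset_iff_subset_ne.mp h.1.2).2⟩

lemma mem_bdry {s y : Finset V} : y ∈ (bdry s).verts ↔ y.Nonempty ∧ y ⊂ s := by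
  simp only [bdry, Finset.mem_filter, Finset.mem_powerset, Finset.ssubset_iff_subset_ne]
  tauto

lemma bdry_adj {s y z : Finset V} : (bdry s).Adj y z ↔
    (y.Nonempty ∧ y ⊂ s) ∧ (z.Nonempty ∧ z ⊂ s) ∧ (y ⊂ z ∨ z ⊂ y) := Iff.rfl

/-- The boundary minus a facet equals the cone graph. -/
lemma bdry_erase_facet_eq {s : Finset V} {v : V} (hv : v ∈ s) (h2 : 2 ≤ s.card) :
    (bdry s).erase (s.erase v) = coneG v (s.erase v) ∅ := by
  have hins : insert v (s.erase v) = s := Finset.insert_erase hv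
  have key : ∀ y : Finset V,
      ((y.Nonempty ∧ y ⊂ s) ∧ y ≠ s.erase v) ↔
      (y ⊆ insert v (s.erase v) ∧ y.Nonempty ∧ ¬ s.erase v ⊆ y ∧
        y ∉ (∅ : Finset (Finset V))) := by
    intro y
    rw [hins]
    constructor
    · rintro ⟨⟨hne, hss⟩, hneF⟩
      refine ⟨hss.subset, hne, ?_, Finset.notMem_empty y⟩
      intro h
      have hcy : y.card < s.card := Finset.card_lt_card hss
      have hce : s.card - 1 = (s.erase v).card := (Finset.card_erase_of_mem hv).symm
      have : s.erase v = y := Finset.eq_of_subset_of_card_le h (by omega)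
      exact hneF this.symm
    · rintro ⟨hsub, hne, hnsub, -⟩
      refine ⟨⟨hne, Finset.ssubset_iff_subset_ne.mpr ⟨hsub, ?_⟩⟩, ?_⟩
      · rintro rfl
        exact hnsub (Finset.erase_subset v y)
      · rintro rfl
        exact hnsub le_rfl
  apply ext'
  · ext y
    rw [mem_erase_verts, mem_bdry, mem_coneG]
    exact key y
  · intro a b
    rw [erase_adj, bdry_adj, coneG_adj']
    constructor
    · rintro ⟨⟨h1, h2', h3⟩, h4, h5⟩
      exact ⟨(key a).mp ⟨h1, h4⟩, (key b).mp ⟨h2', h5⟩, h3⟩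
    · rintro ⟨h1, h2', h3⟩
      obtain ⟨g1, g2⟩ := (key a).mpr h1
      obtain ⟨g3, g4⟩ := (key b).mpr h2'
      exact ⟨⟨g1, g3, h3⟩, g2, g4⟩

lemma bdry_erase_facet_contractible {s : Finset V} {v : V} (hv : v ∈ s)
    (h2 : 2 ≤ s.card) : Contractible ((bdry s).erase (s.erase v)) := by
  rw [bdry_erase_facet_eq hv h2]
  have hF : (s.erase v).Nonempty := by
    rw [← Finset.card_pos, Finset.card_erase_of_mem hv]; omega
  refine coneG_contractible_aux v (Finset.notMem_erase v s) hF _ ∅ le_rfl ?_ ?_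
  · intro t ht; exact absurd ht (Finset.notMem_empty t)
  · intro t ht; exact absurd ht (Finset.notMem_empty t)

lemma bdry_erase_point_contractible {s : Finset V} {v : V} (hv : v ∈ s)
    (h2 : 2 ≤ s.card) : Contractible ((bdry s).erase {v}) := by
  refine Contractible.of_iso (bdry_erase_facet_contractible hv h2) _ ?_
  have hsv : s \ {v} = s.erase v := by
    ext x; simp [Finset.mem_sdiff, Finset.mem_erase]; tauto
  have hcan : ∀ z : Finset V, z ⊆ s → s \ (s \ z) = z :=
    fun z hz => Finset.sdiff_sdiff_eq_self hz
  refine ⟨fun z => s \ z, ⟨?_, ?_, ?_⟩, ?_⟩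
  · intro z hz
    simp only [Finset.mem_coe, mem_erase_verts, mem_bdry] at hz ⊢
    obtain ⟨⟨hne, hss⟩, hneF⟩ := hz
    refine ⟨⟨?_, ?_⟩, ?_⟩
    · rw [Finset.sdiff_nonempty]
      exact fun h => (ssubset_irrefl s) (lt_of_le_of_lt h hss)
    · exact Finset.sdiff_ssubset hss.subset hne
    · intro h
      apply hneF
      rw [← hcan z hss.subset, h, hsv]
  · intro a ha b hb hab
    simp only [Finset.mem_coe, mem_erase_verts, mem_bdry] at ha hb
    have hab2 : s \ a = s \ b := hab
    rw [← hcan a ha.1.2.subset, ← hcan b hb.1.2.subset, hab2]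
  · intro w hw
    simp only [Finset.mem_coe, mem_erase_verts, mem_bdry] at hw
    obtain ⟨⟨hne, hss⟩, hneV⟩ := hw
    refine ⟨s \ w, ?_, hcan w hss.subset⟩
    simp only [Finset.mem_coe, mem_erase_verts, mem_bdry]
    refine ⟨⟨?_, ?_⟩, ?_⟩
    · rw [Finset.sdiff_nonempty]
      exact fun h => (ssubset_irrefl s) (lt_of_le_of_lt h hss)
    · exact Finset.sdiff_ssubset hss.subset hne
    · intro h
      apply hneV
      rw [← hcan w hss.subset, h, ← hsv, hcan _ (Finset.singleton_subset_iff.mpr hv)]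
  · intro a ha b hb
    simp only [Finset.mem_coe, mem_erase_verts, mem_bdry] at ha hb
    obtain ⟨⟨hane, hass⟩, haF⟩ := ha
    obtain ⟨⟨hbne, hbss⟩, hbF⟩ := hb
    beta_reduce
    have hane' : (s \ a).Nonempty := by
      rw [Finset.sdiff_nonempty]
      exact fun h => (ssubset_irrefl s) (lt_of_le_of_lt h hass)
    have hbne' : (s \ b).Nonempty := by
      rw [Finset.sdiff_nonempty]
      exact fun h => (ssubset_irrefl s) (lt_of_le_of_lt h hbss)
    have hass' : s \ a ⊂ s := Finset.sdiff_ssubset hass.subset hane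
    have hbss' : s \ b ⊂ s := Finset.sdiff_ssubset hbss.subset hbne
    rw [erase_adj, erase_adj, bdry_adj, bdry_adj]
    constructor
    · rintro ⟨⟨-, -, hor⟩, hna, hnb⟩
      refine ⟨⟨⟨hane', hass'⟩, ⟨hbne', hbss'⟩, ?_⟩, ?_, ?_⟩
      · rcases hor with h | h
        · exact Or.inr ((sdiff_ssubset_sdiff_iff' hass.subset hbss.subset).mpr h)
        · exact Or.inl ((sdiff_ssubset_sdiff_iff' hbss.subset hass.subset).mpr h)
      · intro h
        apply hna
        rw [← hcan a hass.subset, h]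
        exact hsv
      · intro h
        apply hnb
        rw [← hcan b hbss.subset, h]
        exact hsv
    · rintro ⟨⟨-, -, hor⟩, hna, hnb⟩
      refine ⟨⟨⟨hane, hass⟩, ⟨hbne, hbss⟩, ?_⟩, ?_, ?_⟩
      · rcases hor with h | h
        · exact Or.inr ((sdiff_ssubset_sdiff_iff' hbss.subset hass.subset).mp h)
        · exact Or.inl ((sdiff_ssubset_sdiff_iff' hass.subset hbss.subset).mp h)
      · intro h
        apply hna
        rw [h, ← hsv, hcan _ (Finset.singleton_subset_iff.mpr hv)]
      · intro h
        apply hnb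
        rw [h, ← hsv, hcan _ (Finset.singleton_subset_iff.mpr hv)]
end FGraph
namespace FGraph
variable {V W : Type}

lemma bdry_unitSphere_iso {s y : Finset V} (hyne : y.Nonempty) (hys : y ⊂ s) :
    Iso ((bdry y).join (bdry (s \ y))) ((bdry s).unitSphere y) := by
  have hmemS : ∀ z : Finset V, z ∈ ((bdry s).unitSphere y).verts ↔
      ((z.Nonempty ∧ z ⊂ s) ∧ (y ⊂ z ∨ z ⊂ y)) := by
    intro z
    rw [mem_unitSphere, mem_bdry, bdry_adj]
    constructor
    · rintro ⟨h1, -, -, h3⟩; exact ⟨h1, h3⟩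
    · rintro ⟨h1, h3⟩; exact ⟨h1, ⟨hyne, hys⟩, h1, h3⟩
  have hkey : ∀ u : Finset V, u.Nonempty → u ⊂ s \ y →
      (y ∪ u).Nonempty ∧ (y ∪ u ⊂ s) ∧ (y ⊂ y ∪ u) := by
    intro u hun huss
    obtain ⟨x0, hx0⟩ := hun
    have hx0' := huss.subset hx0
    rw [Finset.mem_sdiff] at hx0'
    obtain ⟨w, hw1, hw2⟩ := Finset.exists_of_ssubset huss
    rw [Finset.mem_sdiff] at hw1
    refine ⟨⟨x0, Finset.mem_union_right y hx0⟩, ?_, ?_⟩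
    · rw [Finset.ssubset_iff_subset_ne]
      refine ⟨Finset.union_subset hys.subset (huss.subset.trans Finset.sdiff_subset), ?_⟩
      intro h
      have hwm : w ∈ y ∪ u := h.symm ▸ hw1.1
      rcases Finset.mem_union.mp hwm with h' | h'
      · exact hw1.2 h'
      · exact hw2 h'
    · rw [Finset.ssubset_iff_subset_ne]
      refine ⟨Finset.subset_union_left, ?_⟩
      intro h
      have : x0 ∈ y := h ▸ Finset.mem_union_right y hx0
      exact hx0'.2 this
  have hdisj : ∀ u : Finset V, u ⊆ s \ y → Disjoint y u := by
    intro u hu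
    rw [Finset.disjoint_left]
    intro x hx hxu
    exact (Finset.mem_sdiff.mp (hu hxu)).2 hx
  refine ⟨Sum.elim id (fun u => y ∪ u), ⟨?_, ?_, ?_⟩, ?_⟩
  · intro x hx
    cases x with
    | inl a =>
      simp only [Finset.mem_coe, join_verts, Finset.inl_mem_disjSum, mem_bdry] at hx
      simp only [Sum.elim_inl, id, Finset.mem_coe, hmemS]
      exact ⟨⟨hx.1, hx.2.trans hys⟩, Or.inr hx.2⟩
    | inr u =>
      simp only [Finset.mem_coe, join_verts, Finset.inr_mem_disjSum, mem_bdry] at hx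
      obtain ⟨h1, h2, h3⟩ := hkey u hx.1 hx.2
      simp only [Sum.elim_inr, Finset.mem_coe, hmemS]
      exact ⟨⟨h1, h2⟩, Or.inl h3⟩
  · intro x hx x' hx' he
    cases x <;> cases x' <;>
      simp only [Finset.mem_coe, join_verts, Finset.inl_mem_disjSum, Finset.inr_mem_disjSum,
        mem_bdry, Sum.elim_inl, Sum.elim_inr, id] at hx hx' he
    · exact congrArg Sum.inl he
    · exfalso
      rename_i a u
      have h3 := (hkey u hx'.1 hx'.2).2.2
      rw [← he] at h3
      exact (ssubset_irrefl y) (h3.trans hx.2)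
    · exfalso
      rename_i u a
      have h3 := (hkey u hx.1 hx.2).2.2
      rw [he] at h3
      exact (ssubset_irrefl y) (h3.trans hx'.2)
    · rename_i u u'
      have hd := hdisj u hx.2.subset
      have hd' := hdisj u' hx'.2.subset
      have hcan : (y ∪ u) \ y = (y ∪ u') \ y := by rw [he]
      rw [Finset.union_sdiff_cancel_left hd, Finset.union_sdiff_cancel_left hd'] at hcan
      exact congrArg Sum.inr hcan
  · intro z hz
    simp only [Finset.mem_coe, hmemS] at hz
    obtain ⟨⟨hzn, hzs⟩, hor⟩ := hz
    rcases hor with h | h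
    · refine ⟨Sum.inr (z \ y), ?_, ?_⟩
      · simp only [Finset.mem_coe, join_verts, Finset.inr_mem_disjSum, mem_bdry]
        constructor
        · rw [Finset.sdiff_nonempty]
          exact fun hc => (ssubset_irrefl y) (lt_of_lt_of_le h hc)
        · rw [Finset.ssubset_iff_subset_ne]
          constructor
          · intro x hx
            rw [Finset.mem_sdiff] at hx ⊢
            exact ⟨hzs.subset hx.1, hx.2⟩
          · intro hc
            have hz2 : z = s := by
              rw [← Finset.union_sdiff_of_subset h.subset, hc,
                Finset.union_sdiff_of_subset hys.subset]
            exact (Finset.ssubset_iff_subset_ne.mp hzs).2 hz2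
      · simp only [Sum.elim_inr]
        exact Finset.union_sdiff_of_subset h.subset
    · refine ⟨Sum.inl z, ?_, rfl⟩
      simp only [Finset.mem_coe, join_verts, Finset.inl_mem_disjSum, mem_bdry]
      exact ⟨hzn, h⟩
  · intro x hx x' hx'
    cases x <;> cases x' <;>
      simp only [Finset.mem_coe, join_verts, Finset.inl_mem_disjSum, Finset.inr_mem_disjSum,
        mem_bdry, Sum.elim_inl, Sum.elim_inr, id] at hx hx' ⊢
    · rename_i a b
      rw [join_adj_ll, bdry_adj, unitSphere_adj, bdry_adj]
      constructor
      · rintro ⟨-, -, hor⟩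
        exact ⟨⟨⟨hx.1, hx.2.trans hys⟩, ⟨hx'.1, hx'.2.trans hys⟩, hor⟩,
          ⟨⟨hyne, hys⟩, ⟨hx.1, hx.2.trans hys⟩, Or.inr hx.2⟩,
          ⟨⟨hyne, hys⟩, ⟨hx'.1, hx'.2.trans hys⟩, Or.inr hx'.2⟩⟩
      · rintro ⟨⟨-, -, hor⟩, -, -⟩
        exact ⟨⟨hx.1, hx.2⟩, ⟨hx'.1, hx'.2⟩, hor⟩
    · rename_i a u
      rw [join_adj_lr]
      obtain ⟨k1, k2, k3⟩ := hkey u hx'.1 hx'.2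
      refine iff_of_true ?_ ?_
      · simp only [mem_bdry]
        exact ⟨hx, hx'⟩
      · rw [unitSphere_adj, bdry_adj, bdry_adj, bdry_adj]
        exact ⟨⟨⟨hx.1, hx.2.trans hys⟩, ⟨k1, k2⟩,
            Or.inl (lt_of_lt_of_le hx.2 Finset.subset_union_left)⟩,
          ⟨⟨hyne, hys⟩, ⟨hx.1, hx.2.trans hys⟩, Or.inr hx.2⟩,
          ⟨⟨hyne, hys⟩, ⟨k1, k2⟩, Or.inl k3⟩⟩
    · rename_i u a
      rw [join_adj_rl]
      obtain ⟨k1, k2, k3⟩ := hkey u hx.1 hx.2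
      refine iff_of_true ?_ ?_
      · simp only [mem_bdry]
        exact ⟨hx', hx⟩
      · rw [unitSphere_adj, bdry_adj, bdry_adj, bdry_adj]
        exact ⟨⟨⟨k1, k2⟩, ⟨hx'.1, hx'.2.trans hys⟩,
            Or.inr (lt_of_lt_of_le hx'.2 Finset.subset_union_left)⟩,
          ⟨⟨hyne, hys⟩, ⟨k1, k2⟩, Or.inl k3⟩,
          ⟨⟨hyne, hys⟩, ⟨hx'.1, hx'.2.trans hys⟩, Or.inr hx'.2⟩⟩
    · rename_i u u'
      rw [join_adj_rr, bdry_adj, unitSphere_adj, bdry_adj]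
      obtain ⟨k1, k2, k3⟩ := hkey u hx.1 hx.2
      obtain ⟨k1', k2', k3'⟩ := hkey u' hx'.1 hx'.2
      have hd := hdisj u hx.2.subset
      have hd' := hdisj u' hx'.2.subset
      constructor
      · rintro ⟨-, -, hor⟩
        refine ⟨⟨⟨k1, k2⟩, ⟨k1', k2'⟩, ?_⟩,
          ⟨⟨hyne, hys⟩, ⟨k1, k2⟩, Or.inl k3⟩,
          ⟨⟨hyne, hys⟩, ⟨k1', k2'⟩, Or.inl k3'⟩⟩
        rcases hor with h | h
        · exact Or.inl ((union_ssubset_union_iff_right hd hd').mpr h)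
        · exact Or.inr ((union_ssubset_union_iff_right hd' hd).mpr h)
      · rintro ⟨⟨-, -, hor⟩, -, -⟩
        refine ⟨⟨hx.1, hx.2⟩, ⟨hx'.1, hx'.2⟩, ?_⟩
        rcases hor with h | h
        · exact Or.inl ((union_ssubset_union_iff_right hd hd').mp h)
        · exact Or.inr ((union_ssubset_union_iff_right hd' hd).mp h)

lemma bdry_sphere_aux : ∀ n : ℕ, ∀ s : Finset V, s.card ≤ n → s.Nonempty →
    IsSphere ((s.card : ℤ) - 2) (bdry s) := by
  intro n
  induction n with
  | zero =>
    intro s h hne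
    rw [← Finset.card_pos] at hne
    omega
  | succ n IH =>
    intro s hcard hne
    by_cases h1 : s.card = 1
    · have hd : (s.card : ℤ) - 2 = -1 := by rw [h1]; norm_num
      rw [hd]
      refine IsSphere.empty _ ?_
      ext y
      simp only [bdry, Finset.mem_filter, Finset.mem_powerset, Finset.notMem_empty,
        iff_false, not_and]
      intro hsub hyne hneq
      have hcy := Finset.card_pos.mpr hyne
      exact hneq (Finset.eq_of_subset_of_card_le hsub (by omega))
    · have h2 : 2 ≤ s.card := by
        have := Finset.card_pos.mpr hne; omega
      have hmani : IsManifold ((s.card:ℤ) - 2) (bdry s) := by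
        refine IsManifold.intro _ (by omega) _ ?_
        intro y hy
        rw [mem_bdry] at hy
        obtain ⟨hyne, hys⟩ := hy
        have hycard : y.card < s.card := Finset.card_lt_card hys
        have hypos : 1 ≤ y.card := Finset.card_pos.mpr hyne
        have hsdne : (s \ y).Nonempty := by
          rw [Finset.sdiff_nonempty]
          exact fun h => (ssubset_irrefl s) (lt_of_le_of_lt h hys)
        have hsdcard : (s \ y).card = s.card - y.card := Finset.card_sdiff_of_subset hys.subset
        have hs1 : IsSphere ((y.card:ℤ) - 2) (bdry y) := IH y (by omega) hyne
        have hs2 : IsSphere (((s\y).card:ℤ) - 2) (bdry (s\y)) := IH (s\y) (by omega) hsdne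
        have hj := join_sphere hs1 hs2
        have hcast : ((s\y).card : ℤ) = (s.card : ℤ) - (y.card : ℤ) := by
          rw [hsdcard, Nat.cast_sub hycard.le]
        have hdim : ((y.card:ℤ) - 2) + (((s\y).card:ℤ) - 2) + 1 = ((s.card:ℤ) - 2) - 1 := by
          omega
        rw [hdim] at hj
        exact hj.of_iso (bdry_unitSphere_iso hyne hys)
      obtain ⟨a0, ha0⟩ := hne
      refine IsSphere.punctured _ _ hmani (s.erase a0) ?_ ?_
      · rw [mem_bdry]
        constructor
        · rw [← Finset.card_pos, Finset.card_erase_of_mem ha0]; omega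
        · exact Finset.erase_ssubset ha0
      · exact bdry_erase_facet_contractible ha0 h2

lemma bdry_sphere {s : Finset V} (hne : s.Nonempty) :
    IsSphere ((s.card : ℤ) - 2) (bdry s) :=
  bdry_sphere_aux s.card s le_rfl hne

end FGraph
namespace FGraph
variable {V W : Type}

/-- The link of a simplex: vertices adjacent to all of `x`. -/
noncomputable def link (G : FGraph V) (x : Finset V) : FGraph V :=
  G.induce (fun w => ∀ a ∈ x, G.Adj w a)

lemma mem_link {G : FGraph V} {x : Finset V} {w : V} :
    w ∈ (G.link x).verts ↔ w ∈ G.verts ∧ ∀ a ∈ x, G.Adj w a := mem_induce_verts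

lemma link_adj {G : FGraph V} {x : Finset V} {w w' : V} :
    (G.link x).Adj w w' ↔ G.Adj w w' ∧ (∀ a ∈ x, G.Adj w a) ∧ (∀ a ∈ x, G.Adj w' a) :=
  Iff.rfl

lemma link_singleton (G : FGraph V) (v : V) : G.link {v} = G.unitSphere v := by
  have hP : ∀ w, (∀ a ∈ ({v} : Finset V), G.Adj w a) ↔ G.Adj v w := by
    intro w
    constructor
    · intro h; exact G.symm (h v (Finset.mem_singleton_self v))
    · intro h a ha
      rw [Finset.mem_singleton] at ha
      exact ha ▸ G.symm h
  apply ext'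
  · ext w
    rw [mem_link, mem_unitSphere, hP]
  · intro a b
    rw [link_adj, unitSphere_adj, hP, hP]

lemma mem_bary {G : FGraph V} {x : Finset V} :
    x ∈ G.barycentric.verts ↔ G.IsSimplex x := by
  simp only [barycentric, Finset.mem_filter, Finset.mem_powerset]
  exact ⟨fun h => h.2, fun h => ⟨Finset.coe_subset.mp h.2.1, h⟩⟩

lemma bary_adj {G : FGraph V} {x y : Finset V} :
    G.barycentric.Adj x y ↔ G.IsSimplex x ∧ G.IsSimplex y ∧ (x ⊂ y ∨ y ⊂ x) := Iff.rfl

lemma IsSimplex.subset' {G : FGraph V} {x y : Finset V} (h : G.IsSimplex x)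
    (hy : y ⊆ x) (hne : y.Nonempty) : G.IsSimplex y := by
  refine ⟨hne, ?_, ?_⟩
  · intro a ha
    exact h.2.1 (hy ha)
  · intro a ha b hb hab
    exact h.2.2 a (hy ha) b (hy hb) hab

lemma isSimplex_singleton {G : FGraph V} {v : V} (hv : v ∈ G.verts) :
    G.IsSimplex {v} := by
  refine ⟨Finset.singleton_nonempty v, ?_, ?_⟩
  · intro a ha
    have ha2 : a = v := Finset.mem_singleton.mp ha
    exact ha2 ▸ hv
  · intro a ha b hb hab
    rw [Finset.mem_singleton] at ha hb
    exact absurd (ha.trans hb.symm) hab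

lemma bary_verts_empty {G : FGraph V} (h : G.verts = ∅) : G.barycentric.verts = ∅ := by
  ext x
  rw [mem_bary]
  simp only [Finset.notMem_empty, iff_false]
  rintro ⟨hne, hsub, -⟩
  obtain ⟨a, ha⟩ := hne
  have h2 := hsub ha
  rw [h] at h2
  simp at h2

lemma isSimplex_link_iff {G : FGraph V} {x z : Finset V} :
    (G.link x).IsSimplex z ↔ G.IsSimplex z ∧ ∀ w ∈ z, ∀ a ∈ x, G.Adj w a := by
  constructor
  · rintro ⟨hne, hsub, hadj⟩
    have hmem : ∀ w ∈ z, w ∈ G.verts ∧ ∀ a ∈ x, G.Adj w a := by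
      intro w hw
      exact mem_link.mp (hsub hw)
    refine ⟨⟨hne, ?_, ?_⟩, fun w hw => (hmem w hw).2⟩
    · intro w hw
      exact (hmem w hw).1
    · intro a ha b hb hab
      exact (hadj a ha b hb hab).1
  · rintro ⟨⟨hne, hsub, hadj⟩, hall⟩
    refine ⟨hne, ?_, ?_⟩
    · intro w hw
      exact mem_link.mpr ⟨hsub hw, hall w hw⟩
    · intro a ha b hb hab
      exact ⟨hadj a ha b hb hab, hall a ha, hall b hb⟩

lemma link_disjoint {G : FGraph V} {x z : Finset V} (hz : ∀ w ∈ z, ∀ a ∈ x, G.Adj w a) :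
    Disjoint x z := by
  rw [Finset.disjoint_right]
  intro w hw hwx
  exact G.loopless w (hz w hw w hwx)

lemma isSimplex_union_link {G : FGraph V} {x z : Finset V} (hx : G.IsSimplex x)
    (hz : G.IsSimplex z) (hzl : ∀ w ∈ z, ∀ a ∈ x, G.Adj w a) : G.IsSimplex (x ∪ z) := by
  obtain ⟨hne, hsub, hadj⟩ := hx
  obtain ⟨hne', hsub', hadj'⟩ := hz
  refine ⟨hne.mono Finset.subset_union_left, ?_, ?_⟩
  · intro w hw
    rcases Finset.mem_union.mp hw with h | h
    · exact hsub h
    · exact hsub' h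
  · intro a ha b hb hab
    rw [Finset.mem_union] at ha hb
    rcases ha with ha | ha <;> rcases hb with hb | hb
    · exact hadj a ha b hb hab
    · exact G.symm (hzl b hb a ha)
    · exact hzl a ha b hb
    · exact hadj' a ha b hb hab

/-- The link of a simplex in a `d`-manifold is a `(d - #x)`-sphere. -/
lemma link_sphere_aux : ∀ n : ℕ, ∀ (G : FGraph V) (d : ℤ) (x : Finset V), x.card ≤ n →
    IsManifold d G → G.IsSimplex x → IsSphere (d - x.card) (G.link x) := by
  intro n
  induction n with
  | zero =>
    intro G d x hc hm hx
    have := Finset.card_pos.mpr hx.1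
    omega
  | succ n IH =>
    intro G d x hc hm hx
    by_cases h1 : x.card = 1
    · obtain ⟨v, rfl⟩ := Finset.card_eq_one.mp h1
      rw [link_singleton]
      have hv : v ∈ G.verts := hx.2.1 (Finset.mem_singleton_self v)
      have hs : IsSphere (d - 1) (G.unitSphere v) := by
        cases hm with | intro _ _ _ h => exact h v hv
      have : ((({v} : Finset V).card : ℤ)) = 1 := by rw [h1]; norm_num
      rw [this]
      exact hs
    · have h2 : 2 ≤ x.card := by
        have := Finset.card_pos.mpr hx.1; omega
      obtain ⟨v, hv⟩ := hx.1
      set x' := x.erase v with hx'def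
      have hvG : v ∈ G.verts := hx.2.1 hv
      have hx'card : x'.card = x.card - 1 := Finset.card_erase_of_mem hv
      have hx'ne : x'.Nonempty := by
        rw [← Finset.card_pos, hx'card]; omega
      set S := G.unitSphere v with hSdef
      have hS : IsSphere (d - 1) S := by
        cases hm with | intro _ _ _ h => exact h v hvG
      -- x' is nonempty inside S, so d - 1 ≥ 0
      obtain ⟨a0, ha0⟩ := hx'ne
      have ha0x : a0 ∈ x := Finset.mem_of_mem_erase ha0
      have ha0ne : a0 ≠ v := Finset.ne_of_mem_erase ha0
      have hadjva : ∀ a ∈ x', G.Adj v a := by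
        intro a ha
        exact hx.2.2 v hv a (Finset.mem_of_mem_erase ha) (Finset.ne_of_mem_erase ha).symm
      have ha0S : a0 ∈ S.verts := by
        rw [hSdef, mem_unitSphere]
        exact ⟨hx.2.1 ha0x, hadjva a0 ha0⟩
      have hd1 : 0 ≤ d - 1 := by
        by_contra hlt
        have hge := hS.neg_one_le
        have : d - 1 = -1 := by omega
        rw [this] at hS
        have := hS.verts_empty
        rw [this] at ha0S
        simp at ha0S
      have hSm : IsManifold (d - 1) S := hS.manifold hd1
      have hx'S : S.IsSimplex x' := by
        refine ⟨⟨a0, ha0⟩, ?_, ?_⟩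
        · intro a ha
          exact mem_unitSphere.mpr ⟨hx.2.1 (Finset.mem_of_mem_erase ha), hadjva a ha⟩
        · intro a ha b hb hab
          exact ⟨hx.2.2 a (Finset.mem_of_mem_erase ha) b (Finset.mem_of_mem_erase hb) hab,
            hadjva a ha, hadjva b hb⟩
      have heq : G.link x = S.link x' := by
        have hPQ : ∀ w, (∀ a ∈ x, G.Adj w a) ↔
            (G.Adj v w ∧ ∀ a ∈ x', S.Adj w a) := by
          intro w
          constructor
          · intro h
            refine ⟨G.symm (h v hv), ?_⟩
            intro a ha
            exact ⟨h a (Finset.mem_of_mem_erase ha), G.symm (h v hv), hadjva a ha⟩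
          · rintro ⟨hvw, h⟩
            intro a ha
            by_cases hav : a = v
            · exact hav ▸ G.symm hvw
            · exact (h a (Finset.mem_erase.mpr ⟨hav, ha⟩)).1
        apply ext'
        · ext w
          rw [mem_link, mem_link, hSdef, mem_unitSphere, hPQ]
          tauto
        · intro a b
          rw [link_adj, link_adj, hPQ, hPQ, hSdef, unitSphere_adj]
          tauto
      rw [heq]
      have hIH := IH S (d-1) x' (by omega) hSm hx'S
      have hcast : (x'.card : ℤ) = (x.card : ℤ) - 1 := by
        rw [hx'card, Nat.cast_sub (by omega)]
        norm_num
      have : (d - 1) - (x'.card : ℤ) = d - (x.card : ℤ) := by omega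
      rw [this] at hIH
      exact hIH

lemma link_sphere {G : FGraph V} {d : ℤ} {x : Finset V} (hm : IsManifold d G)
    (hx : G.IsSimplex x) : IsSphere (d - x.card) (G.link x) :=
  link_sphere_aux x.card G d x le_rfl hm hx

end FGraph
namespace FGraph
variable {V W : Type}

lemma bary_unitSphere_iso {G : FGraph V} {x : Finset V} (hx : G.IsSimplex x) :
    Iso ((bdry x).join ((G.link x).barycentric)) (G.barycentric.unitSphere x) := by
  have hmemS : ∀ y : Finset V, y ∈ (G.barycentric.unitSphere x).verts ↔
      (G.IsSimplex y ∧ (x ⊂ y ∨ y ⊂ x)) := by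
    intro y
    rw [mem_unitSphere, mem_bary, bary_adj]
    tauto
  have hfact : ∀ z : Finset V, (G.link x).IsSimplex z →
      G.IsSimplex (x ∪ z) ∧ Disjoint x z ∧ x ⊂ x ∪ z := by
    intro z hz
    obtain ⟨hz1, hz2⟩ := isSimplex_link_iff.mp hz
    have hdis := link_disjoint hz2
    refine ⟨isSimplex_union_link hx hz1 hz2, hdis, ?_⟩
    rw [Finset.ssubset_iff_subset_ne]
    refine ⟨Finset.subset_union_left, ?_⟩
    intro h
    obtain ⟨w, hw⟩ := hz1.1
    have hwx : w ∈ x := h ▸ Finset.mem_union_right x hw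
    exact (Finset.disjoint_right.mp hdis hw) hwx
  refine ⟨Sum.elim id (fun z => x ∪ z), ⟨?_, ?_, ?_⟩, ?_⟩
  · intro p hp
    cases p with
    | inl a =>
      simp only [Finset.mem_coe, join_verts, Finset.inl_mem_disjSum, mem_bdry] at hp
      simp only [Sum.elim_inl, id, Finset.mem_coe, hmemS]
      exact ⟨hx.subset' hp.2.subset hp.1, Or.inr hp.2⟩
    | inr z =>
      simp only [Finset.mem_coe, join_verts, Finset.inr_mem_disjSum, mem_bary] at hp
      obtain ⟨k1, k2, k3⟩ := hfact z hp
      simp only [Sum.elim_inr, Finset.mem_coe, hmemS]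
      exact ⟨k1, Or.inl k3⟩
  · intro p hp q hq he
    cases p <;> cases q <;>
      simp only [Finset.mem_coe, join_verts, Finset.inl_mem_disjSum, Finset.inr_mem_disjSum,
        mem_bdry, mem_bary, Sum.elim_inl, Sum.elim_inr, id] at hp hq he
    · exact congrArg Sum.inl he
    · exfalso
      rename_i a z
      have k3 := (hfact z hq).2.2
      rw [← he] at k3
      exact (ssubset_irrefl x) (k3.trans hp.2)
    · exfalso
      rename_i z a
      have k3 := (hfact z hp).2.2
      rw [he] at k3
      exact (ssubset_irrefl x) (k3.trans hq.2)
    · rename_i z z'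
      have hd := (hfact z hp).2.1
      have hd' := (hfact z' hq).2.1
      have hcan : (x ∪ z) \ x = (x ∪ z') \ x := by rw [he]
      rw [Finset.union_sdiff_cancel_left hd, Finset.union_sdiff_cancel_left hd'] at hcan
      exact congrArg Sum.inr hcan
  · intro y hy
    simp only [Finset.mem_coe, hmemS] at hy
    obtain ⟨hys, hor⟩ := hy
    rcases hor with h | h
    · refine ⟨Sum.inr (y \ x), ?_, ?_⟩
      · simp only [Finset.mem_coe, join_verts, Finset.inr_mem_disjSum, mem_bary]
        rw [isSimplex_link_iff]
        have hne : (y \ x).Nonempty := by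
          rw [Finset.sdiff_nonempty]
          exact fun hc => (ssubset_irrefl x) (lt_of_lt_of_le h hc)
        refine ⟨hys.subset' Finset.sdiff_subset hne, ?_⟩
        intro w hw a ha
        rw [Finset.mem_sdiff] at hw
        exact hys.2.2 w hw.1 a (h.subset ha) (fun hc => hw.2 (hc ▸ ha))
      · simp only [Sum.elim_inr]
        exact Finset.union_sdiff_of_subset h.subset
    · refine ⟨Sum.inl y, ?_, rfl⟩
      simp only [Finset.mem_coe, join_verts, Finset.inl_mem_disjSum, mem_bdry]
      exact ⟨hys.1, h⟩
  · intro p hp q hq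
    cases p <;> cases q <;>
      simp only [Finset.mem_coe, join_verts, Finset.inl_mem_disjSum, Finset.inr_mem_disjSum,
        mem_bdry, mem_bary, Sum.elim_inl, Sum.elim_inr, id] at hp hq ⊢
    · rename_i a b
      have hsa : G.IsSimplex a := hx.subset' hp.2.subset hp.1
      have hsb : G.IsSimplex b := hx.subset' hq.2.subset hq.1
      rw [join_adj_ll, bdry_adj, unitSphere_adj, bary_adj, bary_adj, bary_adj]
      constructor
      · rintro ⟨-, -, hor⟩
        exact ⟨⟨hsa, hsb, hor⟩, ⟨hx, hsa, Or.inr hp.2⟩, ⟨hx, hsb, Or.inr hq.2⟩⟩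
      · rintro ⟨⟨-, -, hor⟩, -, -⟩
        exact ⟨hp, hq, hor⟩
    · rename_i a z
      rw [join_adj_lr]
      obtain ⟨k1, k2, k3⟩ := hfact z hq
      have hsa : G.IsSimplex a := hx.subset' hp.2.subset hp.1
      refine iff_of_true ?_ ?_
      · simp only [mem_bdry, mem_bary]
        exact ⟨hp, hq⟩
      · rw [unitSphere_adj, bary_adj, bary_adj, bary_adj]
        exact ⟨⟨hsa, k1, Or.inl (lt_of_lt_of_le hp.2 Finset.subset_union_left)⟩,
          ⟨hx, hsa, Or.inr hp.2⟩, ⟨hx, k1, Or.inl k3⟩⟩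
    · rename_i z a
      rw [join_adj_rl]
      obtain ⟨k1, k2, k3⟩ := hfact z hp
      have hsa : G.IsSimplex a := hx.subset' hq.2.subset hq.1
      refine iff_of_true ?_ ?_
      · simp only [mem_bdry, mem_bary]
        exact ⟨hq, hp⟩
      · rw [unitSphere_adj, bary_adj, bary_adj, bary_adj]
        exact ⟨⟨k1, hsa, Or.inr (lt_of_lt_of_le hq.2 Finset.subset_union_left)⟩,
          ⟨hx, k1, Or.inl k3⟩, ⟨hx, hsa, Or.inr hq.2⟩⟩
    · rename_i z z'
      obtain ⟨k1, k2, k3⟩ := hfact z hp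
      obtain ⟨k1', k2', k3'⟩ := hfact z' hq
      rw [join_adj_rr, bary_adj, unitSphere_adj, bary_adj, bary_adj, bary_adj]
      constructor
      · rintro ⟨-, -, hor⟩
        refine ⟨⟨k1, k1', ?_⟩, ⟨hx, k1, Or.inl k3⟩, ⟨hx, k1', Or.inl k3'⟩⟩
        rcases hor with h | h
        · exact Or.inl ((union_ssubset_union_iff_right k2 k2').mpr h)
        · exact Or.inr ((union_ssubset_union_iff_right k2' k2).mpr h)
      · rintro ⟨⟨-, -, hor⟩, -, -⟩
        refine ⟨hp, hq, ?_⟩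
        rcases hor with h | h
        · exact Or.inl ((union_ssubset_union_iff_right k2 k2').mp h)
        · exact Or.inr ((union_ssubset_union_iff_right k2' k2).mp h)

end FGraph
namespace FGraph
variable {V W : Type}

lemma isSimplex_erase_iff {G : FGraph V} {v : V} {y : Finset V} :
    (G.erase v).IsSimplex y ↔ G.IsSimplex y ∧ v ∉ y := by
  constructor
  · rintro ⟨hne, hsub, hadj⟩
    have hmem : ∀ w ∈ y, w ∈ G.verts ∧ w ≠ v := fun w hw => mem_erase_verts.mp (hsub hw)
    refine ⟨⟨hne, fun w hw => (hmem w hw).1, ?_⟩, fun hv => (hmem v hv).2 rfl⟩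
    intro a ha b hb hab
    exact (hadj a ha b hb hab).1
  · rintro ⟨⟨hne, hsub, hadj⟩, hv⟩
    refine ⟨hne, ?_, ?_⟩
    · intro w hw
      exact mem_erase_verts.mpr ⟨hsub hw, fun h => hv (h ▸ hw)⟩
    · intro a ha b hb hab
      exact ⟨hadj a ha b hb hab, fun h => hv (h ▸ ha), fun h => hv (h ▸ hb)⟩

lemma bary_induce_eq_erase_bary {G : FGraph V} {v : V} {T : Finset (Finset V)}
    (hT : ∀ t ∈ T, G.IsSimplex t ∧ v ∈ t)
    (hall : ∀ y, G.IsSimplex y → v ∈ y → y ∈ T) :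
    G.barycentric.induce (fun y => y ∉ T) = (G.erase v).barycentric := by
  have key : ∀ y, (G.IsSimplex y ∧ y ∉ T) ↔ (G.erase v).IsSimplex y := by
    intro y
    rw [isSimplex_erase_iff]
    constructor
    · rintro ⟨h1, h2⟩
      exact ⟨h1, fun hv => h2 (hall y h1 hv)⟩
    · rintro ⟨h1, h2⟩
      exact ⟨h1, fun hT' => h2 (hT y hT').2⟩
  apply ext'
  · ext y
    rw [mem_induce_verts, mem_bary, mem_bary, ← key y]
  · intro a b
    rw [induce_adj, bary_adj, bary_adj, ← key a, ← key b]
    tauto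

lemma bary_collapse_aux {G : FGraph V} {v : V} :
    ∀ N : ℕ, ∀ T : Finset (Finset V),
    (G.barycentric.verts.filter (fun y => v ∈ y ∧ y ∉ T)).card ≤ N →
    {v} ∈ T →
    (∀ t ∈ T, G.IsSimplex t ∧ v ∈ t) →
    (∀ t ∈ T, 2 ≤ t.card → ∀ y, t ⊆ y → G.IsSimplex y → y ∈ T) →
    Contractible ((G.erase v).barycentric) →
    Contractible (G.barycentric.induce (fun y => y ∉ T)) := by
  intro N
  induction N with
  | zero =>
    intro T hcard hvT hT1 hT2 hc
    have hemp : G.barycentric.verts.filter (fun y => v ∈ y ∧ y ∉ T) = ∅ := by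
      rw [← Finset.card_eq_zero]; omega
    have hall : ∀ y, G.IsSimplex y → v ∈ y → y ∈ T := by
      intro y hy hvy
      by_contra hyT
      have hmem : y ∈ G.barycentric.verts.filter (fun y => v ∈ y ∧ y ∉ T) :=
        Finset.mem_filter.mpr ⟨mem_bary.mpr hy, hvy, hyT⟩
      rw [hemp] at hmem
      exact absurd hmem (Finset.notMem_empty y)
    rw [bary_induce_eq_erase_bary hT1 hall]
    exact hc
  | succ N IH =>
    intro T hcard hvT hT1 hT2 hc
    by_cases hS : G.barycentric.verts.filter (fun y => v ∈ y ∧ y ∉ T) = ∅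
    · have hall : ∀ y, G.IsSimplex y → v ∈ y → y ∈ T := by
        intro y hy hvy
        by_contra hyT
        have hmem : y ∈ G.barycentric.verts.filter (fun y => v ∈ y ∧ y ∉ T) :=
          Finset.mem_filter.mpr ⟨mem_bary.mpr hy, hvy, hyT⟩
        rw [hS] at hmem
        exact absurd hmem (Finset.notMem_empty y)
      rw [bary_induce_eq_erase_bary hT1 hall]
      exact hc
    · obtain ⟨y0, hy0S, hy0max⟩ :=
        Finset.exists_max_image _ Finset.card (Finset.nonempty_iff_ne_empty.mpr hS)
      have hy0 : G.IsSimplex y0 ∧ v ∈ y0 ∧ y0 ∉ T := by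
        have h := hy0S
        rw [Finset.mem_filter, mem_bary] at h
        tauto
      have hy0c2 : 2 ≤ y0.card := by
        by_contra hlt
        have h1 : 1 ≤ y0.card := Finset.card_pos.mpr ⟨v, hy0.2.1⟩
        have heq : y0.card = 1 := by omega
        obtain ⟨a, ha⟩ := Finset.card_eq_one.mp heq
        have hva : v = a := by
          have := hy0.2.1; rw [ha, Finset.mem_singleton] at this; exact this
        rw [ha, ← hva] at hy0
        exact hy0.2.2 hvT
      have hmax : ∀ y, y0 ⊂ y → G.IsSimplex y → v ∈ y → y ∈ T := by
        intro y hss hy hvy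
        by_contra hyT
        have hmem : y ∈ G.barycentric.verts.filter (fun y => v ∈ y ∧ y ∉ T) :=
          Finset.mem_filter.mpr ⟨mem_bary.mpr hy, hvy, hyT⟩
        have hle := hy0max y hmem
        have := Finset.card_lt_card hss
        omega
      set R := G.barycentric.induce (fun y => y ∉ T) with hR
      have hy0v : y0 ∈ R.verts := by
        rw [hR, mem_induce_verts]
        exact ⟨mem_bary.mpr hy0.1, hy0.2.2⟩
      -- membership in T for small subsets of y0 is impossible
      have hsubT : ∀ w : Finset V, w.Nonempty → w ⊂ y0 → w ≠ {v} → w ∉ T := by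
        intro w hwne hwss hwv hwT
        have hvw : v ∈ w := (hT1 w hwT).2
        by_cases hcw : 2 ≤ w.card
        · exact hy0.2.2 (hT2 w hwT hcw y0 hwss.subset hy0.1)
        · have h1 : 1 ≤ w.card := Finset.card_pos.mpr hwne
          have heq : w.card = 1 := by omega
          obtain ⟨a, ha⟩ := Finset.card_eq_one.mp heq
          have hva : v = a := by
            have := hvw; rw [ha, Finset.mem_singleton] at this; exact this
          rw [ha, ← hva] at hwv
          exact hwv rfl
      have key : ∀ w : Finset V, w ∈ (R.unitSphere y0).verts ↔
          ((w.Nonempty ∧ w ⊂ y0) ∧ w ≠ {v}) := by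
        intro w
        rw [mem_unitSphere]
        constructor
        · rintro ⟨hwv, hadj⟩
          rw [hR, induce_adj, bary_adj] at hadj
          obtain ⟨⟨hs0, hsw, hor⟩, h0T, hwT⟩ := hadj
          have hwss : w ⊂ y0 := by
            rcases hor with h | h
            · exfalso
              have hvw : v ∈ w := h.subset hy0.2.1
              exact hwT (hmax w h hsw hvw)
            · exact h
          refine ⟨⟨hsw.1, hwss⟩, ?_⟩
          rintro rfl
          exact hwT hvT
        · rintro ⟨⟨hwne, hwss⟩, hwv⟩
          have hsw : G.IsSimplex w := hy0.1.subset' hwss.subset hwne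
          have hwT : w ∉ T := hsubT w hwne hwss hwv
          refine ⟨?_, ?_⟩
          · rw [hR, mem_induce_verts]
            exact ⟨mem_bary.mpr hsw, hwT⟩
          · rw [hR, induce_adj, bary_adj]
            exact ⟨⟨hy0.1, hsw, Or.inr hwss⟩, hy0.2.2, hwT⟩
      refine Contractible.step _ y0 hy0v ?_ ?_
      · refine Contractible.of_iso (bdry_erase_point_contractible hy0.2.1 hy0c2) _ ?_
        refine ⟨id, ⟨?_, ?_, ?_⟩, ?_⟩
        · intro w hw
          simp only [Finset.mem_coe, mem_erase_verts, mem_bdry, id] at hw ⊢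
          exact (key w).mpr hw
        · intro a _ b _ h
          exact h
        · intro w hw
          simp only [Finset.mem_coe] at hw
          refine ⟨w, ?_, rfl⟩
          simp only [Finset.mem_coe, mem_erase_verts, mem_bdry]
          exact (key w).mp hw
        · intro a ha b hb
          simp only [Finset.mem_coe, mem_erase_verts, mem_bdry, id] at ha hb
          obtain ⟨⟨hane, hass⟩, hav⟩ := ha
          obtain ⟨⟨hbne, hbss⟩, hbv⟩ := hb
          have haS := (key a).mpr ⟨⟨hane, hass⟩, hav⟩
          have hbS := (key b).mpr ⟨⟨hbne, hbss⟩, hbv⟩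
          rw [mem_unitSphere] at haS hbS
          have hsa : G.IsSimplex a := hy0.1.subset' hass.subset hane
          have hsb : G.IsSimplex b := hy0.1.subset' hbss.subset hbne
          have haT : a ∉ T := hsubT a hane hass hav
          have hbT : b ∉ T := hsubT b hbne hbss hbv
          rw [erase_adj, bdry_adj, unitSphere_adj]
          constructor
          · rintro ⟨⟨-, -, hor⟩, -, -⟩
            refine ⟨?_, haS.2, hbS.2⟩
            rw [hR, induce_adj, bary_adj]
            exact ⟨⟨hsa, hsb, hor⟩, haT, hbT⟩
          · rintro ⟨hab, -, -⟩
            rw [hR, induce_adj, bary_adj] at hab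
            exact ⟨⟨⟨hane, hass⟩, ⟨hbne, hbss⟩, hab.1.2.2⟩, hav, hbv⟩
      · have herase : R.erase y0 = G.barycentric.induce (fun y => y ∉ insert y0 T) := by
          apply ext'
          · ext y
            rw [mem_erase_verts, hR, mem_induce_verts, mem_induce_verts, Finset.mem_insert]
            tauto
          · intro a b
            rw [erase_adj, hR, induce_adj, induce_adj, Finset.mem_insert, Finset.mem_insert]
            tauto
        rw [herase]
        refine IH (insert y0 T) ?_ (Finset.mem_insert_of_mem hvT) ?_ ?_ hc
        · have hSeq : G.barycentric.verts.filter (fun y => v ∈ y ∧ y ∉ insert y0 T) =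
              (G.barycentric.verts.filter (fun y => v ∈ y ∧ y ∉ T)).erase y0 := by
            ext y
            simp only [Finset.mem_erase, Finset.mem_filter, Finset.mem_insert]
            tauto
          rw [hSeq, Finset.card_erase_of_mem hy0S]
          omega
        · intro t ht
          rcases Finset.mem_insert.mp ht with h | h
          · exact h ▸ ⟨hy0.1, hy0.2.1⟩
          · exact hT1 t h
        · intro t ht hc2 y hsub hy
          rcases Finset.mem_insert.mp ht with h | h
          · subst h
            by_cases hey : y = t
            · rw [hey]; exact Finset.mem_insert_self _ _
            · refine Finset.mem_insert_of_mem
                (hmax y (Finset.ssubset_iff_subset_ne.mpr ⟨hsub, Ne.symm hey⟩) hy ?_)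
              exact hsub hy0.2.1
          · exact Finset.mem_insert_of_mem (hT2 t h hc2 y hsub hy)

lemma bary_singleton_verts {G : FGraph V} {v : V} (h : G.verts = {v}) :
    G.barycentric.verts = {({v} : Finset V)} := by
  ext x
  rw [mem_bary, Finset.mem_singleton]
  constructor
  · rintro ⟨hne, hsub, -⟩
    have hx : x ⊆ {v} := by
      intro a ha
      have := hsub ha
      rw [h] at this
      exact this
    rcases Finset.subset_singleton_iff.mp hx with h' | h'
    · rw [h'] at hne; exact absurd hne Finset.not_nonempty_empty
    · exact h'
  · rintro rfl
    exact isSimplex_singleton (h ▸ Finset.mem_singleton_self v)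

lemma contractible_bary {G : FGraph V} (h : Contractible G) :
    Contractible G.barycentric := by
  induction h with
  | single G v hv => exact Contractible.single _ {v} (bary_singleton_verts hv)
  | step G v hv h1 h2 IH1 IH2 =>
    have hvs : G.IsSimplex {v} := isSimplex_singleton hv
    refine Contractible.step _ {v} (mem_bary.mpr hvs) ?_ ?_
    · refine Contractible.of_iso ?_ _ (bary_unitSphere_iso hvs)
      refine Contractible.join_right _ ?_
      rw [link_singleton]
      exact IH1
    · have he : G.barycentric.erase {v} =
          G.barycentric.induce (fun y => y ∉ ({({v} : Finset V)} : Finset (Finset V))) := by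
        apply ext'
        · ext y
          rw [mem_erase_verts, mem_induce_verts, Finset.mem_singleton]
        · intro a b
          rw [erase_adj, induce_adj, Finset.mem_singleton, Finset.mem_singleton]
      rw [he]
      refine bary_collapse_aux _ _ le_rfl (Finset.mem_singleton_self _) ?_ ?_ IH2
      · intro t ht
        rw [Finset.mem_singleton] at ht
        subst ht
        exact ⟨hvs, Finset.mem_singleton_self v⟩
      · intro t ht hc2
        rw [Finset.mem_singleton] at ht
        subst ht
        simp at hc2

end FGraph
namespace FGraph
variable {V W : Type}

lemma bary_erase_singleton_contractible {G : FGraph V} {v : V} (hv : v ∈ G.verts)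
    (hcb : Contractible ((G.erase v).barycentric)) :
    Contractible (G.barycentric.erase {v}) := by
  have hvs : G.IsSimplex {v} := isSimplex_singleton hv
  have he : G.barycentric.erase {v} =
      G.barycentric.induce (fun y => y ∉ ({({v} : Finset V)} : Finset (Finset V))) := by
    apply ext'
    · ext y
      rw [mem_erase_verts, mem_induce_verts, Finset.mem_singleton]
    · intro a b
      rw [erase_adj, induce_adj, Finset.mem_singleton, Finset.mem_singleton]
  rw [he]
  refine bary_collapse_aux _ _ le_rfl (Finset.mem_singleton_self _) ?_ ?_ hcb
  · intro t ht
    rw [Finset.mem_singleton] at ht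
    subst ht
    exact ⟨hvs, Finset.mem_singleton_self v⟩
  · intro t ht hc2
    rw [Finset.mem_singleton] at ht
    subst ht
    simp at hc2

lemma main_aux : ∀ n : ℕ, ∀ {V : Type} (G : FGraph V),
    (IsManifold (n : ℤ) G → IsManifold (n : ℤ) G.barycentric) ∧
    (IsSphere (n : ℤ) G → IsSphere (n : ℤ) G.barycentric) := by
  intro n
  induction n using Nat.strong_induction_on with
  | _ n IH =>
    intro V G
    have hman : IsManifold (n:ℤ) G → IsManifold (n:ℤ) G.barycentric := by
      intro hm
      refine IsManifold.intro _ (Int.natCast_nonneg n) _ ?_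
      intro x hx
      have hxs : G.IsSimplex x := mem_bary.mp hx
      have hc1 : 1 ≤ x.card := Finset.card_pos.mpr hxs.1
      have hlink : IsSphere ((n:ℤ) - x.card) (G.link x) := link_sphere hm hxs
      have hlink1 : IsSphere ((n:ℤ) - x.card) (G.link x).barycentric := by
        have hge := hlink.neg_one_le
        by_cases he : (n:ℤ) - x.card = -1
        · rw [he] at hlink ⊢
          exact IsSphere.empty _ (bary_verts_empty hlink.verts_empty)
        · have h0 : 0 ≤ (n:ℤ) - x.card := by omega
          set m := ((n:ℤ) - x.card).toNat with hm'
          have hm2 : (m : ℤ) = (n:ℤ) - x.card := Int.toNat_of_nonneg h0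
          have hlt : m < n := by omega
          rw [← hm2] at hlink ⊢
          exact (IH m hlt _).2 hlink
      have hbd : IsSphere ((x.card:ℤ) - 2) (bdry x) := bdry_sphere hxs.1
      have hj := join_sphere hbd hlink1
      have hdim : ((x.card:ℤ) - 2) + ((n:ℤ) - x.card) + 1 = (n:ℤ) - 1 := by ring
      rw [hdim] at hj
      exact hj.of_iso (bary_unitSphere_iso hxs)
    refine ⟨hman, ?_⟩
    intro hs
    generalize hgen : (n:ℤ) = d at hs
    cases hs with
    | empty _ h => omega
    | punctured d G hm' v hv hc =>
      subst hgen
      refine IsSphere.punctured _ _ (hman hm') {v}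
        (mem_bary.mpr (isSimplex_singleton hv)) ?_
      exact bary_erase_singleton_contractible hv (contractible_bary hc)

end FGraph
/-- The Barycentric refinement of a `d`-manifold is a `d`-manifold, and
the Barycentric refinement of a `d`-sphere is a `d`-sphere. -/
theorem barycentric_manifold_and_sphere {V : Type} (G : FGraph V) (d : ℤ) :
    (FGraph.IsManifold d G → FGraph.IsManifold d G.barycentric) ∧
    (FGraph.IsSphere d G → FGraph.IsSphere d G.barycentric) := by
  constructor
  · intro h
    have h0 := h.nonneg
    have hcast : ((d.toNat : ℕ) : ℤ) = d := Int.toNat_of_nonneg h0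
    rw [← hcast] at h ⊢
    exact (FGraph.main_aux d.toNat G).1 h
  · intro h
    have h1 := h.neg_one_le
    by_cases hd : d = -1
    · subst hd
      exact FGraph.IsSphere.empty _ (FGraph.bary_verts_empty h.verts_empty)
    · have h0 : 0 ≤ d := by omega
      have hcast : ((d.toNat : ℕ) : ℤ) = d := Int.toNat_of_nonneg h0
      rw [← hcast] at h ⊢
      exact (FGraph.main_aux d.toNat G).2 h
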